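/- arXiv:1608.07726 — 10 statements merged into one kernel-verified Lean document; each statement's English description precedes it below -/
import Mathlib

section
/- Two nonempty sets Ω₁, Ω₂ in a normed space X form an extremal system (i.e., for every ε > 0 there exists a ∈ X with ‖a‖ ≤ ε and (Ω₁ + a) ∩ Ω₂ = ∅) if and only if 0 is not an interior point of the set difference Ω₁ - Ω₂. -/
open Pointwise

theorem extremal_iff_not_interior {X : Type*} [NormedAddCommGroup X] [NormedSpace ℝ X]
    (Ω₁ Ω₂ : Set X) (h₁ : Ω₁.Nonempty) (h₂ : Ω₂.Nonempty) :
    (∀ ε > 0, ∃ a : X, ‖a‖ ≤ ε ∧ (a +ᵥ Ω₁) ∩ Ω₂ = ∅) ↔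
      (0 : X) ∉ interior (Ω₁ - Ω₂) := by
  have key : ∀ a : X, ((a +ᵥ Ω₁) ∩ Ω₂ = ∅) ↔ (-a) ∉ Ω₁ - Ω₂ := by
    intro a
    rw [Set.eq_empty_iff_forall_notMem]
    constructor
    · rintro h ⟨x, hx, y, hy, hxy⟩
      exact h y ⟨⟨x, hx, by show a + x = y; rw [← neg_neg a, ← hxy, neg_sub, sub_add_cancel]⟩, hy⟩
    · rintro h y ⟨⟨x, hx, rfl⟩, hy⟩
      exact h ⟨x, hx, a +ᵥ x, hy, by show x - (a + x) = -a; abel⟩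
  constructor
  · intro h hmem
    rcases Metric.mem_nhds_iff.mp (mem_interior_iff_mem_nhds.mp hmem) with ⟨δ, hδ, hball⟩
    rcases h (δ/2) (by linarith) with ⟨a, ha, hempty⟩
    exact (key a).mp hempty (hball (by rw [mem_ball_zero_iff, norm_neg]; linarith))
  · intro h ε hε
    by_contra hcon
    push_neg at hcon
    apply h
    rw [mem_interior_iff_mem_nhds, Metric.mem_nhds_iff]
    refine ⟨ε, hε, fun b hb => ?_⟩
    by_contra hb'
    obtain ⟨y, ⟨x, hx, rfl⟩, hy⟩ :=
      hcon (-b) (by rw [norm_neg]; exact (mem_ball_zero_iff.mp hb).le)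
    exact hb' ⟨x, hx, -b +ᵥ x, hy, by show x - (-b + x) = b; abel⟩
end

section
/- Let Ω₁, Ω₂ be nonempty convex subsets of a normed space X forming an extremal system, and assume the interior of Ω₁ - Ω₂ is nonempty. Then there exists a nonzero continuous linear functional x* with sup_{x ∈ Ω₁} ⟨x*, x⟩ ≤ inf_{x ∈ Ω₂} ⟨x*, x⟩. -/
open Pointwise

theorem extremal_convex_separation {X : Type*} [NormedAddCommGroup X] [NormedSpace ℝ X]
    (Ω₁ Ω₂ : Set X) (h₁ : Ω₁.Nonempty) (h₂ : Ω₂.Nonempty)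
    (hc₁ : Convex ℝ Ω₁) (hc₂ : Convex ℝ Ω₂)
    (hext : ∀ ε > 0, ∃ a : X, ‖a‖ ≤ ε ∧ (a +ᵥ Ω₁) ∩ Ω₂ = ∅)
    (hint : (interior (Ω₁ - Ω₂)).Nonempty) :
    ∃ f : X →L[ℝ] ℝ, f ≠ 0 ∧ ∀ x ∈ Ω₁, ∀ y ∈ Ω₂, f x ≤ f y := by
  set s : Set X := Ω₁ - Ω₂ with hs
  have hcs : Convex ℝ s := hc₁.sub hc₂
  -- 0 is not in the interior of s
  have h0 : (0 : X) ∉ interior s := by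
    intro h0
    obtain ⟨δ, hδ, hball⟩ := Metric.isOpen_iff.1 isOpen_interior 0 h0
    obtain ⟨a, ha, hdisj⟩ := hext (δ / 2) (by positivity)
    have hmem : -a ∈ s := by
      have : -a ∈ Metric.ball (0 : X) δ := by
        simp only [Metric.mem_ball, dist_zero_right, norm_neg]
        linarith
      exact interior_subset (hball this)
    obtain ⟨x, hx, y, hy, hxy⟩ := hmem
    -- -a = x - y, so a + x = y ∈ (a +ᵥ Ω₁) ∩ Ω₂
    have : y ∈ (a +ᵥ Ω₁) ∩ Ω₂ := by
      refine ⟨⟨x, hx, ?_⟩, hy⟩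
      have : x - y = -a := hxy
      simp only [vadd_eq_add]
      linear_combination (norm := abel_nf) this
    rw [hdisj] at this
    exact this
  obtain ⟨f, hf⟩ := geometric_hahn_banach_open_point hcs.interior isOpen_interior h0
  simp only [map_zero] at hf
  obtain ⟨w, hw⟩ := hint
  have hfw : f w < 0 := hf w hw
  refine ⟨f, ?_, ?_⟩
  · intro h
    rw [h] at hfw
    simp at hfw
  · intro x hx y hy
    have hz : x - y ∈ s := ⟨x, hx, y, hy, rfl⟩
    -- show f (x - y) ≤ 0
    have key : ∀ z ∈ s, f z ≤ 0 := by
      intro z hz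
      have hseg : openSegment ℝ z w ⊆ interior s :=
        hcs.openSegment_self_interior_subset_interior hz hw
      have hcl : z ∈ closure (openSegment ℝ z w) := by
        rw [closure_openSegment]
        exact left_mem_segment ℝ z w
      have : z ∈ closure (interior s) := closure_mono hseg hcl
      have hclosed : IsClosed (f ⁻¹' Set.Iic 0) := isClosed_Iic.preimage f.continuous
      have : z ∈ f ⁻¹' Set.Iic 0 :=
        hclosed.closure_subset (closure_mono (fun u hu => (hf u hu).le) this)
      exact this
    have := key (x - y) hz
    rw [map_sub] at this
    linarith
end

section
/- Let Ω₁, Ω₂ be nonempty convex subsets of a normed space X with int Ω₁ ≠ ∅ and (int Ω₁) ∩ Ω₂ = ∅. Then Ω₁ and Ω₂ form an extremal system, i.e., for every ε > 0 there exists a ∈ X with ‖a‖ ≤ ε and (Ω₁ + a) ∩ Ω₂ = ∅. -/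
open Pointwise

theorem convex_interior_disjoint_extremal {X : Type*} [NormedAddCommGroup X]
    [NormedSpace ℝ X] (Ω₁ Ω₂ : Set X) (h₁ : Ω₁.Nonempty) (h₂ : Ω₂.Nonempty)
    (hc₁ : Convex ℝ Ω₁) (hc₂ : Convex ℝ Ω₂)
    (hint : (interior Ω₁).Nonempty) (hdisj : interior Ω₁ ∩ Ω₂ = ∅) :
    ∀ ε > 0, ∃ a : X, ‖a‖ ≤ ε ∧ (a +ᵥ Ω₁) ∩ Ω₂ = ∅ := by
  intro ε hε
  obtain ⟨f, c, hfs, hft⟩ := geometric_hahn_banach_open hc₁.interior isOpen_interior hc₂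
    (Set.disjoint_iff_inter_eq_empty.mpr hdisj)
  obtain ⟨x₀, hx₀⟩ := hint
  obtain ⟨y₀, hy₀⟩ := h₂
  -- f is nonzero
  have hfne : f ≠ 0 := by
    intro h
    have h1 := hfs x₀ hx₀
    have h2 := hft y₀ hy₀
    simp [h] at h1 h2
    linarith
  obtain ⟨u, hu⟩ : ∃ u, f u ≠ 0 := by
    by_contra h
    push_neg at h
    exact hfne (ContinuousLinearMap.ext fun x => by simp [h x])
  -- pick a with ‖a‖ ≤ ε and f a < 0
  set a : X := -((ε / ‖u‖) * Real.sign (f u)) • u with ha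
  have hune : u ≠ 0 := fun h => hu (by simp [h])
  have hnu : (0:ℝ) < ‖u‖ := norm_pos_iff.mpr hune
  have hna : ‖a‖ ≤ ε := by
    rw [ha, norm_smul, norm_neg]
    have : |Real.sign (f u)| ≤ 1 := by
      rcases Real.sign_apply_eq (f u) with h | h | h <;> simp [h]
    calc ‖(ε / ‖u‖) * Real.sign (f u)‖ * ‖u‖
        ≤ (ε / ‖u‖) * 1 * ‖u‖ := by
          apply mul_le_mul_of_nonneg_right _ hnu.le
          rw [Real.norm_eq_abs, abs_mul, abs_of_pos (div_pos hε hnu)]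
          exact mul_le_mul_of_nonneg_left this (div_pos hε hnu).le
      _ = ε := by field_simp
  have hfa : f a < 0 := by
    rw [ha, map_smul, smul_eq_mul, neg_mul]
    have : Real.sign (f u) * f u = |f u| := by
      rcases lt_trichotomy (f u) 0 with h | h | h
      · rw [Real.sign_of_neg h, abs_of_neg h]; ring
      · exact absurd h hu
      · rw [Real.sign_of_pos h, abs_of_pos h]; ring
    have habs : (0:ℝ) < |f u| := abs_pos.mpr hu
    rw [neg_lt, neg_zero, mul_assoc, this]
    exact mul_pos (div_pos hε hnu) habs
  -- f ≤ c on Ω₁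
  have hcl : Ω₁ ⊆ closure (interior Ω₁) := by
    intro x hx
    have htd : Filter.Tendsto (fun t : ℝ => x + t • (x₀ - x)) (nhdsWithin 0 (Set.Ioi 0)) (nhds x) := by
      have hco : Continuous (fun t : ℝ => x + t • (x₀ - x)) :=
        continuous_const.add (continuous_id.smul continuous_const)
      have : Filter.Tendsto (fun t : ℝ => x + t • (x₀ - x)) (nhds 0) (nhds x) := by
        simpa using hco.tendsto 0
      exact this.mono_left nhdsWithin_le_nhds
    refine mem_closure_of_tendsto htd ?_
    filter_upwards [Ioc_mem_nhdsGT_of_mem (Set.left_mem_Ico.mpr one_pos)] with t ht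
    exact hc₁.add_smul_sub_mem_interior hx hx₀ ht
  have hle : ∀ x ∈ Ω₁, f x ≤ c := fun x hx =>
    closure_minimal (fun y hy => (hfs y hy).le)
      (isClosed_Iic.preimage f.continuous) (hcl hx)
  refine ⟨a, hna, ?_⟩
  ext z
  simp only [Set.mem_inter_iff, Set.mem_empty_iff_false, iff_false, not_and]
  rintro ⟨x, hx, rfl⟩ hz
  have h1 : f (a +ᵥ x) < c := by
    have := hle x hx
    simp only [vadd_eq_add, map_add]
    linarith
  exact absurd (hft _ hz) (not_le.mpr h1)
end

section
/- Let Ω₁, Ω₂ be closed convex subsets of a Banach space X forming an extremal system, and let x̄ ∈ Ω₁ ∩ Ω₂. Then for every ε > 0 there exist points xᵢ ∈ B(x̄; ε) ∩ Ωᵢ (i = 1,2) and functionals x₁*, x₂* ∈ X* with x₁* + x₂* = 0, ‖x₁*‖ = ‖x₂*‖ = 1, and xᵢ* ∈ N(xᵢ; Ωᵢ) + ε B*, where B* is the closed unit ball of X*. -/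
open Pointwise Filter Topology

lemma my_ekeland {α : Type*} [MetricSpace α] [CompleteSpace α]
    (f : α → ℝ) (hf : Continuous f) (hf0 : ∀ x, 0 ≤ f x)
    {σ : ℝ} (hσ : 0 < σ) (x₀ : α) :
    ∃ x, σ * dist x x₀ ≤ f x₀ - f x ∧ ∀ y, f x ≤ f y + σ * dist x y := by
  classical
  set S : α → Set α := fun x => {y | f y + σ * dist y x ≤ f x} with hS
  have hself : ∀ x, x ∈ S x := fun x => by simp [hS]
  have htrans : ∀ {x y w : α}, y ∈ S x → w ∈ S y → w ∈ S x := by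
    intro x y w hy hw
    simp only [hS, Set.mem_setOf_eq] at hy hw ⊢
    have h1 := mul_le_mul_of_nonneg_left (dist_triangle w y x) hσ.le
    nlinarith
  have hSclosed : ∀ x, IsClosed (S x) := by
    intro x
    exact isClosed_le (hf.add (continuous_const.mul (Continuous.dist continuous_id
      continuous_const))) continuous_const
  have hne : ∀ x, (f '' S x).Nonempty := fun x => ⟨f x, x, hself x, rfl⟩
  have hbdd : ∀ x, BddBelow (f '' S x) := by
    intro x
    exact ⟨0, by rintro b ⟨y, -, rfl⟩; exact hf0 y⟩
  set m : α → ℝ := fun x => sInf (f '' S x) with hm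
  have hm_le : ∀ x, ∀ y ∈ S x, m x ≤ f y := fun x y hy => csInf_le (hbdd x) ⟨y, hy, rfl⟩
  have hstep : ∀ (x : α) (n : ℕ), ∃ y, y ∈ S x ∧ f y < m x + (1/2 : ℝ)^n := by
    intro x n
    obtain ⟨b, ⟨y, hy, rfl⟩, hb⟩ := Real.lt_sInf_add_pos (hne x) (by positivity :
      (0:ℝ) < (1/2 : ℝ)^n)
    exact ⟨y, hy, hb⟩
  set seq : ℕ → α := fun n => Nat.rec x₀ (fun n x => Classical.choose (hstep x n)) n with hseq
  have hseq0 : seq 0 = x₀ := rfl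
  have hseqS : ∀ n, seq (n+1) ∈ S (seq n) := fun n => (Classical.choose_spec (hstep (seq n) n)).1
  have hseqf : ∀ n, f (seq (n+1)) < m (seq n) + (1/2 : ℝ)^n :=
    fun n => (Classical.choose_spec (hstep (seq n) n)).2
  have hchain : ∀ n k, seq (n+k) ∈ S (seq n) := by
    intro n k
    induction k with
    | zero => exact hself _
    | succ k ih => exact htrans ih (hseqS (n+k))
  have hchain' : ∀ {n k : ℕ}, n ≤ k → seq k ∈ S (seq n) := by
    intro n k hnk
    obtain ⟨j, rfl⟩ := Nat.exists_eq_add_of_le hnk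
    exact hchain n j
  have hdist : ∀ {n k : ℕ}, n ≤ k → σ * dist (seq k) (seq n) ≤ f (seq n) - f (seq k) := by
    intro n k hnk
    have := hchain' hnk
    simp only [hS, Set.mem_setOf_eq] at this
    linarith
  have hanti : ∀ {n k : ℕ}, n ≤ k → f (seq k) ≤ f (seq n) := by
    intro n k hnk
    have := hdist hnk
    nlinarith [dist_nonneg (x := seq k) (y := seq n)]
  -- convergence of f ∘ seq
  have hbdd2 : BddBelow (Set.range fun n => f (seq n)) := ⟨0, by rintro b ⟨n, rfl⟩; exact hf0 _⟩
  set L : ℝ := ⨅ n, f (seq n) with hL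
  have hLtend : Tendsto (fun n => f (seq n)) atTop (𝓝 L) :=
    tendsto_atTop_ciInf (fun a b hab => hanti hab) hbdd2
  have hLle : ∀ n, L ≤ f (seq n) := fun n => ciInf_le hbdd2 n
  have hcauchy : CauchySeq seq := by
    apply cauchySeq_of_le_tendsto_0 (b := fun N => (f (seq N) - L)/σ)
    · intro n k N hn hk
      rcases le_total n k with h | h
      · have h1 := hdist h
        have h2 := hanti hn
        have h3 := hLle k
        rw [dist_comm, le_div_iff₀ hσ]
        nlinarith
      · have h1 := hdist h
        have h2 := hanti hk
        have h3 := hLle n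
        rw [le_div_iff₀ hσ]
        nlinarith
    · have : Tendsto (fun N => (f (seq N) - L)/σ) atTop (𝓝 ((L - L)/σ)) :=
        ((hLtend.sub tendsto_const_nhds).div_const σ)
      simpa using this
  obtain ⟨x, hx⟩ := cauchySeq_tendsto_of_complete hcauchy
  have hxS : ∀ n, x ∈ S (seq n) := by
    intro n
    refine (hSclosed (seq n)).mem_of_tendsto hx ?_
    filter_upwards [eventually_ge_atTop n] with k hk
    exact hchain' hk
  refine ⟨x, ?_, ?_⟩
  · have := hxS 0
    simp only [hS, hseq0, Set.mem_setOf_eq] at this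
    linarith
  · intro y
    by_contra hcon
    push_neg at hcon
    have hyS : y ∈ S x := by
      simp only [hS, Set.mem_setOf_eq]
      rw [dist_comm]
      exact hcon.le
    have hyn : ∀ n, y ∈ S (seq n) := fun n => htrans (hxS n) hyS
    have hfx : ∀ n, f x ≤ f y + (1/2 : ℝ)^n := by
      intro n
      have h1 : m (seq n) ≤ f y := hm_le _ _ (hyn n)
      have h2 := hseqf n
      have h3 := hxS (n+1)
      simp only [hS, Set.mem_setOf_eq] at h3
      nlinarith [dist_nonneg (x := x) (y := seq (n+1))]
    have hfxy : f x ≤ f y := by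
      have htend : Tendsto (fun n : ℕ => f y + (1/2 : ℝ)^n) atTop (𝓝 (f y + 0)) :=
        tendsto_const_nhds.add (tendsto_pow_atTop_nhds_zero_of_lt_one (by norm_num) (by norm_num))
      rw [add_zero] at htend
      exact ge_of_tendsto htend (Eventually.of_forall hfx)
    nlinarith [dist_nonneg (x := x) (y := y)]

lemma helper_sublinear {X : Type*} [NormedAddCommGroup X] [NormedSpace ℝ X]
    (D : Set (X × ℝ)) (h0 : ((0 : X), (0 : ℝ)) ∈ D)
    (hadd : ∀ p ∈ D, ∀ q ∈ D, p + q ∈ D)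
    (hsmul : ∀ s : ℝ, 0 < s → ∀ p ∈ D, s • p ∈ D)
    (hlb : ∀ p ∈ D, -‖p.1‖ ≤ p.2) :
    ∃ g : X →L[ℝ] ℝ, ‖g‖ ≤ 1 ∧ ∀ p ∈ D, -p.2 ≤ g p.1 := by
  classical
  set T : X → Set ℝ := fun v => (fun p : X × ℝ => ‖v + p.1‖ + p.2) '' D with hT
  set N : X → ℝ := fun v => sInf (T v) with hN
  have hne : ∀ v, (T v).Nonempty := fun v => ⟨‖v + 0‖ + 0, ⟨(0,0), h0, rfl⟩⟩
  have hlow : ∀ v, ∀ b ∈ T v, -‖v‖ ≤ b := by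
    rintro v b ⟨p, hp, rfl⟩
    dsimp only
    have h1 := hlb p hp
    have h2 : ‖p.1‖ ≤ ‖v + p.1‖ + ‖v‖ := by
      calc ‖p.1‖ = ‖(v + p.1) + (-v)‖ := by rw [show v + p.1 + -v = p.1 from by abel]
        _ ≤ ‖v + p.1‖ + ‖-v‖ := norm_add_le _ _
        _ = ‖v + p.1‖ + ‖v‖ := by rw [norm_neg]
    linarith
  have hBdd : ∀ v, BddBelow (T v) := fun v => ⟨-‖v‖, fun b hb => hlow v b hb⟩
  have hNlb : ∀ v, -‖v‖ ≤ N v := fun v => le_csInf (hne v) (hlow v)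
  have hNmem : ∀ v, ∀ p ∈ D, N v ≤ ‖v + p.1‖ + p.2 := fun v p hp =>
    csInf_le (hBdd v) ⟨p, hp, rfl⟩
  have hNle : ∀ v, N v ≤ ‖v‖ := by
    intro v
    have := hNmem v (0,0) h0
    simpa using this
  have hhom_le : ∀ s : ℝ, 0 < s → ∀ v, N (s • v) ≤ s * N v := by
    intro s hs v
    rw [mul_comm, ← div_le_iff₀ hs]
    refine le_csInf (hne v) ?_
    rintro b ⟨p, hp, rfl⟩
    dsimp only
    rw [div_le_iff₀ hs]
    have hmem := hNmem (s • v) (s • p) (hsmul s hs p hp)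
    have he : ‖s • v + (s • p).1‖ + (s • p).2 = s * (‖v + p.1‖ + p.2) := by
      simp only [Prod.smul_fst, Prod.smul_snd, smul_eq_mul, ← smul_add, norm_smul,
        Real.norm_eq_abs, abs_of_pos hs]
      ring
    rw [he] at hmem
    linarith [hmem, mul_comm s (‖v + p.1‖ + p.2)]
  have N_hom : ∀ s : ℝ, 0 < s → ∀ v, N (s • v) = s * N v := by
    intro s hs v
    refine le_antisymm (hhom_le s hs v) ?_
    have h1 := hhom_le s⁻¹ (inv_pos.mpr hs) (s • v)
    rw [smul_smul, inv_mul_cancel₀ hs.ne', one_smul] at h1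
    have := mul_le_mul_of_nonneg_left h1 hs.le
    rw [← mul_assoc, mul_inv_cancel₀ hs.ne', one_mul] at this
    linarith
  have N_add : ∀ v w, N (v + w) ≤ N v + N w := by
    intro v w
    refine le_of_forall_pos_le_add ?_
    intro δ hδ
    obtain ⟨b₁, hb₁T, hb₁⟩ := Real.lt_sInf_add_pos (hne v) (half_pos hδ)
    obtain ⟨b₂, hb₂T, hb₂⟩ := Real.lt_sInf_add_pos (hne w) (half_pos hδ)
    obtain ⟨p, hp, rfl⟩ := hb₁T
    obtain ⟨q, hq, rfl⟩ := hb₂T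
    have hm := hNmem (v + w) (p + q) (hadd p hp q hq)
    have htri : ‖v + w + (p + q).1‖ ≤ ‖v + p.1‖ + ‖w + q.1‖ := by
      have h := norm_add_le (v + p.1) (w + q.1)
      have he : (v + p.1) + (w + q.1) = v + w + (p + q).1 := by
        simp only [Prod.fst_add]; abel
      rw [he] at h
      exact h
    have hsnd : (p + q).2 = p.2 + q.2 := rfl
    rw [hsnd] at hm
    have hNv : N v = sInf (T v) := rfl
    have hNw : N w = sInf (T w) := rfl
    rw [← hNv] at hb₁
    rw [← hNw] at hb₂
    linarith
  obtain ⟨g₀, -, hg₀⟩ := exists_extension_of_le_sublinear ((0 : X →ₗ[ℝ] ℝ).toPMap ⊥) N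
    N_hom N_add (by
      rintro ⟨x, hx⟩
      have hx0 : x = 0 := (Submodule.mem_bot ℝ).mp hx
      have h1 := hNlb 0
      simp only [LinearMap.toPMap_apply, LinearMap.zero_apply, hx0]
      simpa using h1)
  have habs : ∀ v, ‖g₀ v‖ ≤ 1 * ‖v‖ := by
    intro v
    rw [Real.norm_eq_abs, abs_le, one_mul]
    constructor
    · have h1 : g₀ (-v) ≤ N (-v) := hg₀ (-v)
      have h2 := hNle (-v)
      rw [map_neg] at h1
      rw [norm_neg] at h2
      linarith
    · exact (hg₀ v).trans (hNle v)
  refine ⟨g₀.mkContinuous 1 habs, g₀.mkContinuous_norm_le (by norm_num) habs, ?_⟩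
  intro p hp
  have h1 : g₀ (-p.1) ≤ N (-p.1) := hg₀ _
  have h2 := hNmem (-p.1) p hp
  rw [neg_add_cancel, norm_zero, zero_add] at h2
  have h3 : g₀ (-p.1) = -g₀ p.1 := map_neg g₀ p.1
  simp only [LinearMap.mkContinuous_apply]
  linarith

def coneOf {X : Type*} [AddCommGroup X] [Module ℝ X] (Ω : Set X) (x₁ : X) : Set X :=
  {c | ∃ t : ℝ, 0 ≤ t ∧ ∃ x ∈ Ω, c = t • (x - x₁)}

lemma coneOf_zero {X : Type*} [AddCommGroup X] [Module ℝ X] {Ω : Set X} {x₁ : X}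
    (hx₁ : x₁ ∈ Ω) : (0 : X) ∈ coneOf Ω x₁ :=
  ⟨0, le_rfl, x₁, hx₁, by simp⟩

lemma coneOf_self {X : Type*} [AddCommGroup X] [Module ℝ X] {Ω : Set X} {x₁ x : X}
    (hx : x ∈ Ω) : x - x₁ ∈ coneOf Ω x₁ :=
  ⟨1, zero_le_one, x, hx, (one_smul _ _).symm⟩

lemma coneOf_smul {X : Type*} [AddCommGroup X] [Module ℝ X] {Ω : Set X} {x₁ c : X} {s : ℝ}
    (hs : 0 ≤ s) (hc : c ∈ coneOf Ω x₁) : s • c ∈ coneOf Ω x₁ := by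
  obtain ⟨t, ht, x, hx, rfl⟩ := hc
  exact ⟨s * t, mul_nonneg hs ht, x, hx, by rw [smul_smul]⟩

lemma coneOf_add {X : Type*} [AddCommGroup X] [Module ℝ X] {Ω : Set X} (hΩ : Convex ℝ Ω)
    {x₁ c d : X} (hc : c ∈ coneOf Ω x₁) (hd : d ∈ coneOf Ω x₁) : c + d ∈ coneOf Ω x₁ := by
  obtain ⟨t, ht, x, hx, rfl⟩ := hc
  obtain ⟨s, hs, y, hy, rfl⟩ := hd
  rcases eq_or_lt_of_le (add_nonneg ht hs) with h0 | hpos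
  · have ht0 : t = 0 := by linarith
    have hs0 : s = 0 := by linarith
    exact ⟨0, le_rfl, x, hx, by simp [ht0, hs0]⟩
  · refine ⟨t + s, hpos.le, (t/(t+s)) • x + (s/(t+s)) • y,
      hΩ hx hy (div_nonneg ht hpos.le) (div_nonneg hs hpos.le)
        (by field_simp), ?_⟩
    match_scalars <;> (field_simp; try ring)

lemma coneOf_bound {X : Type*} [NormedAddCommGroup X] [NormedSpace ℝ X] {Ω : Set X} {x₁ : X}
    (φ : X →L[ℝ] ℝ) {ε : ℝ} (h : ∀ x ∈ Ω, φ (x - x₁) ≤ ε * ‖x - x₁‖) :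
    ∀ c ∈ coneOf Ω x₁, φ c ≤ ε * ‖c‖ := by
  rintro c ⟨t, ht, x, hx, rfl⟩
  rw [map_smul, smul_eq_mul, norm_smul, Real.norm_eq_abs, abs_of_nonneg ht]
  calc t * φ (x - x₁) ≤ t * (ε * ‖x - x₁‖) :=
        mul_le_mul_of_nonneg_left (h x hx) ht
    _ = ε * (t * ‖x - x₁‖) := by ring

lemma key_normal {X : Type*} [NormedAddCommGroup X] [NormedSpace ℝ X]
    {Ω : Set X} (hΩ : Convex ℝ Ω) {x₁ : X} (hx₁ : x₁ ∈ Ω)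
    (φ : X →L[ℝ] ℝ) {ε : ℝ} (hε : 0 < ε)
    (h : ∀ x ∈ Ω, φ (x - x₁) ≤ ε * ‖x - x₁‖) :
    ∃ u : X →L[ℝ] ℝ, (∀ y ∈ Ω, u (y - x₁) ≤ 0) ∧ ‖φ - u‖ ≤ ε := by
  classical
  set D : Set (X × ℝ) := {p | ∃ c ∈ coneOf Ω x₁, p = (c, -(ε⁻¹ * φ c))} with hD
  have hbnd := coneOf_bound φ h
  obtain ⟨g, hg1, hg2⟩ := helper_sublinear D
    (⟨0, coneOf_zero hx₁, by simp⟩)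
    (by
      rintro p ⟨c, hc, rfl⟩ q ⟨d, hd, rfl⟩
      refine ⟨c + d, coneOf_add hΩ hc hd, ?_⟩
      simp only [Prod.mk_add_mk, map_add, Prod.mk.injEq]
      exact ⟨trivial, by ring⟩)
    (by
      rintro s hs p ⟨c, hc, rfl⟩
      refine ⟨s • c, coneOf_smul hs.le hc, ?_⟩
      simp only [Prod.smul_mk, map_smul, smul_eq_mul, Prod.mk.injEq]
      exact ⟨trivial, by ring⟩)
    (by
      rintro p ⟨c, hc, rfl⟩
      simp only
      have h1 := hbnd c hc
      have h2 : ε⁻¹ * φ c ≤ ε⁻¹ * (ε * ‖c‖) := mul_le_mul_of_nonneg_left h1 (by positivity)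
      rw [← mul_assoc, inv_mul_cancel₀ hε.ne', one_mul] at h2
      linarith)
  have hgc : ∀ c ∈ coneOf Ω x₁, φ c ≤ ε * g c := by
    intro c hc
    have := hg2 (c, -(ε⁻¹ * φ c)) ⟨c, hc, rfl⟩
    simp only [neg_neg] at this
    have h2 := mul_le_mul_of_nonneg_left this hε.le
    rw [← mul_assoc, mul_inv_cancel₀ hε.ne', one_mul] at h2
    exact h2
  refine ⟨φ - ε • g, ?_, ?_⟩
  · intro y hy
    have := hgc (y - x₁) (coneOf_self hy)
    simp only [ContinuousLinearMap.sub_apply, ContinuousLinearMap.smul_apply, smul_eq_mul]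
    linarith
  · have heq : φ - (φ - ε • g) = ε • g := by abel
    rw [heq]
    refine (norm_smul_le ε g).trans ?_
    rw [Real.norm_eq_abs, abs_of_pos hε]
    nlinarith

set_option maxHeartbeats 1000000 in
theorem convex_approximate_extremal_principle {X : Type*} [NormedAddCommGroup X]
    [NormedSpace ℝ X] [CompleteSpace X] (Ω₁ Ω₂ : Set X)
    (h₁ : Ω₁.Nonempty) (h₂ : Ω₂.Nonempty)
    (hcl₁ : IsClosed Ω₁) (hcl₂ : IsClosed Ω₂)
    (hc₁ : Convex ℝ Ω₁) (hc₂ : Convex ℝ Ω₂)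
    (hext : ∀ δ > 0, ∃ a : X, ‖a‖ ≤ δ ∧ (a +ᵥ Ω₁) ∩ Ω₂ = ∅)
    (xb : X) (hxb : xb ∈ Ω₁ ∩ Ω₂) :
    ∀ ε > 0, ∃ x₁ ∈ Metric.closedBall xb ε ∩ Ω₁, ∃ x₂ ∈ Metric.closedBall xb ε ∩ Ω₂,
      ∃ x₁' x₂' : X →L[ℝ] ℝ, x₁' + x₂' = 0 ∧ ‖x₁'‖ = 1 ∧ ‖x₂'‖ = 1 ∧
        (∃ u₁ : X →L[ℝ] ℝ, (∀ y ∈ Ω₁, u₁ (y - x₁) ≤ 0) ∧ ‖x₁' - u₁‖ ≤ ε) ∧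
        (∃ u₂ : X →L[ℝ] ℝ, (∀ y ∈ Ω₂, u₂ (y - x₂) ≤ 0) ∧ ‖x₂' - u₂‖ ≤ ε) := by
  intro ε hε
  set σ : ℝ := ε / 2 with hσdef
  have hσ : 0 < σ := by positivity
  obtain ⟨a, ha, hdisj⟩ := hext (ε ^ 2 / 2) (by positivity)
  set K : Set (X × X) := Ω₁ ×ˢ Ω₂ with hKdef
  have hK : IsClosed K := hcl₁.prod hcl₂
  haveI : CompleteSpace K := hK.completeSpace_coe
  set f : K → ℝ := fun p => ‖(p : X × X).1 + a - (p : X × X).2‖ with hfdef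
  have hfc : Continuous f :=
    ((continuous_subtype_val.fst.add continuous_const).sub continuous_subtype_val.snd).norm
  have hx0mem : ((xb, xb) : X × X) ∈ K := Set.mem_prod.mpr ⟨hxb.1, hxb.2⟩
  obtain ⟨xh, hek1, hek2⟩ := my_ekeland f hfc (fun p => norm_nonneg _) hσ ⟨(xb, xb), hx0mem⟩
  set x₁ : X := (xh : X × X).1 with hx₁def
  set x₂ : X := (xh : X × X).2 with hx₂def
  have hx₁ : x₁ ∈ Ω₁ := xh.2.1
  have hx₂ : x₂ ∈ Ω₂ := xh.2.2
  have hfx0 : f ⟨(xb, xb), hx0mem⟩ = ‖a‖ := by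
    simp only [hfdef]
    rw [show xb + a - xb = a by abel]
  -- distance bounds
  have hdle : dist xh (⟨(xb, xb), hx0mem⟩ : K) ≤ ε := by
    have h1 : (0:ℝ) ≤ f xh := norm_nonneg _
    rw [hfx0] at hek1
    nlinarith [dist_nonneg (x := xh) (y := (⟨(xb, xb), hx0mem⟩ : K))]
  have hd1 : dist x₁ xb ≤ ε := by
    have : dist x₁ xb ≤ dist xh (⟨(xb, xb), hx0mem⟩ : K) := by
      rw [Subtype.dist_eq, Prod.dist_eq]
      exact le_max_left _ _
    linarith
  have hd2 : dist x₂ xb ≤ ε := by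
    have : dist x₂ xb ≤ dist xh (⟨(xb, xb), hx0mem⟩ : K) := by
      rw [Subtype.dist_eq, Prod.dist_eq]
      exact le_max_right _ _
    linarith
  set z : X := x₁ + a - x₂ with hzdef
  have hz : z ≠ 0 := by
    intro h0
    have heq : x₁ + a = x₂ := sub_eq_zero.mp h0
    have hmem : x₂ ∈ (a +ᵥ Ω₁) ∩ Ω₂ := by
      refine ⟨Set.mem_vadd_set.mpr ⟨x₁, hx₁, ?_⟩, hx₂⟩
      rw [vadd_eq_add, add_comm]
      exact heq
    rw [hdisj] at hmem
    exact hmem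
  have hznorm : 0 < ‖z‖ := norm_pos_iff.mpr hz
  -- base variational inequality from Ekeland minimality
  have hbase : ∀ x ∈ Ω₁, ∀ y ∈ Ω₂,
      ‖z‖ ≤ ‖z + ((x - x₁) - (y - x₂))‖ + σ * ‖x - x₁‖ + σ * ‖y - x₂‖ := by
    intro x hx y hy
    have hmem : ((x, y) : X × X) ∈ K := Set.mem_prod.mpr ⟨hx, hy⟩
    have h := hek2 ⟨(x, y), hmem⟩
    have hfy : f ⟨(x, y), hmem⟩ = ‖z + ((x - x₁) - (y - x₂))‖ := by
      simp only [hfdef]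
      rw [show x + a - y = z + ((x - x₁) - (y - x₂)) by rw [hzdef]; abel]
    have hfx : f xh = ‖z‖ := rfl
    have hdist : dist xh (⟨(x, y), hmem⟩ : K) ≤ ‖x - x₁‖ + ‖y - x₂‖ := by
      rw [Subtype.dist_eq, Prod.dist_eq]
      have e1 : dist (xh : X × X).1 x = ‖x - x₁‖ := by
        rw [dist_comm, dist_eq_norm, ← hx₁def]
      have e2 : dist (xh : X × X).2 y = ‖y - x₂‖ := by
        rw [dist_comm, dist_eq_norm, ← hx₂def]
      rw [e1, e2]
      exact max_le (le_add_of_nonneg_right (norm_nonneg _))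
        (le_add_of_nonneg_left (norm_nonneg _))
    rw [hfx, hfy] at h
    have := mul_le_mul_of_nonneg_left hdist hσ.le
    linarith
  -- homogeneous version over the cones
  have hstar : ∀ c ∈ coneOf Ω₁ x₁, ∀ d ∈ coneOf Ω₂ x₂,
      ‖z‖ ≤ ‖z + (c - d)‖ + σ * ‖c‖ + σ * ‖d‖ := by
    rintro c ⟨t, ht, x, hx, rfl⟩ d ⟨s, hs, y, hy, rfl⟩
    set lam : ℝ := (1 + t + s)⁻¹ with hlam
    have hlampos : 0 < lam := by positivity
    have hlam1 : lam ≤ 1 := by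
      rw [hlam]
      rw [inv_le_one_iff₀]
      right; linarith
    have hmut : lam * t ≤ 1 := by
      rw [hlam, inv_mul_le_iff₀ (by positivity)]
      linarith
    have hmus : lam * s ≤ 1 := by
      rw [hlam, inv_mul_le_iff₀ (by positivity)]
      linarith
    have hmutn : 0 ≤ lam * t := mul_nonneg hlampos.le ht
    have hmusn : 0 ≤ lam * s := mul_nonneg hlampos.le hs
    have hpt1 : x₁ + (lam * t) • (x - x₁) ∈ Ω₁ := by
      have hmem := hc₁ hx₁ hx (by linarith : (0:ℝ) ≤ 1 - lam * t) hmutn (by ring)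
      have : x₁ + (lam * t) • (x - x₁) = (1 - lam * t) • x₁ + (lam * t) • x := by
        rw [smul_sub, sub_smul, one_smul]; abel
      rw [this]
      exact hmem
    have hpt2 : x₂ + (lam * s) • (y - x₂) ∈ Ω₂ := by
      have hmem := hc₂ hx₂ hy (by linarith : (0:ℝ) ≤ 1 - lam * s) hmusn (by ring)
      have : x₂ + (lam * s) • (y - x₂) = (1 - lam * s) • x₂ + (lam * s) • y := by
        rw [smul_sub, sub_smul, one_smul]; abel
      rw [this]
      exact hmem
    have hb := hbase _ hpt1 _ hpt2
    rw [add_sub_cancel_left, add_sub_cancel_left] at hb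
    have e1 : (lam * t) • (x - x₁) = lam • (t • (x - x₁)) := by rw [smul_smul]
    have e2 : (lam * s) • (y - x₂) = lam • (s • (y - x₂)) := by rw [smul_smul]
    rw [e1, e2] at hb
    have e3 : lam • (t • (x - x₁)) - lam • (s • (y - x₂))
        = lam • (t • (x - x₁) - s • (y - x₂)) := (smul_sub _ _ _).symm
    rw [e3] at hb
    have e4 : z + lam • (t • (x - x₁) - s • (y - x₂))
        = lam • (z + (t • (x - x₁) - s • (y - x₂))) + (1 - lam) • z := by
      rw [smul_add, sub_smul, one_smul]; abel
    have e5 : ‖z + lam • (t • (x - x₁) - s • (y - x₂))‖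
        ≤ lam * ‖z + (t • (x - x₁) - s • (y - x₂))‖ + (1 - lam) * ‖z‖ := by
      rw [e4]
      refine (norm_add_le _ _).trans ?_
      rw [norm_smul, norm_smul, Real.norm_eq_abs, Real.norm_eq_abs,
        abs_of_pos hlampos, abs_of_nonneg (by linarith : (0:ℝ) ≤ 1 - lam)]
    have e6 : ‖lam • (t • (x - x₁))‖ = lam * ‖t • (x - x₁)‖ := by
      rw [norm_smul, Real.norm_eq_abs, abs_of_pos hlampos]
    have e7 : ‖lam • (s • (y - x₂))‖ = lam * ‖s • (y - x₂)‖ := by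
      rw [norm_smul, Real.norm_eq_abs, abs_of_pos hlampos]
    rw [e6, e7] at hb
    nlinarith [hb, e5]
  -- r-scaled version
  have hstar2 : ∀ c ∈ coneOf Ω₁ x₁, ∀ d ∈ coneOf Ω₂ x₂, ∀ r : ℝ, 0 ≤ r →
      r * ‖z‖ ≤ ‖c - d + r • z‖ + σ * ‖c‖ + σ * ‖d‖ := by
    intro c hc d hd r hr
    rcases eq_or_lt_of_le hr with h0 | hrpos
    · rw [← h0]
      have : (0:ℝ) * ‖z‖ = 0 := by ring
      rw [this]
      positivity
    · have hc' := coneOf_smul (by positivity : (0:ℝ) ≤ r⁻¹) hc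
      have hd' := coneOf_smul (by positivity : (0:ℝ) ≤ r⁻¹) hd
      have h := hstar _ hc' _ hd'
      have e1 : r⁻¹ • c - r⁻¹ • d = r⁻¹ • (c - d) := (smul_sub _ _ _).symm
      have e2 : z + r⁻¹ • (c - d) = r⁻¹ • (c - d + r • z) := by
        rw [smul_add, smul_smul, inv_mul_cancel₀ hrpos.ne', one_smul]; abel
      rw [e1, e2] at h
      simp only [norm_smul, Real.norm_eq_abs, abs_of_pos (inv_pos.mpr hrpos)] at h
      have h2 := mul_le_mul_of_nonneg_left h hrpos.le
      have hr0 : r ≠ 0 := hrpos.ne'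
      have e : r * (r⁻¹ * ‖c - d + r • z‖ + σ * (r⁻¹ * ‖c‖) + σ * (r⁻¹ * ‖d‖))
          = ‖c - d + r • z‖ + σ * ‖c‖ + σ * ‖d‖ := by
        field_simp
      rw [e] at h2
      exact h2
  -- the separating functional via Hahn-Banach on the penalized cone
  set Dm : Set (X × ℝ) := {p | ∃ c ∈ coneOf Ω₁ x₁, ∃ d ∈ coneOf Ω₂ x₂, ∃ r : ℝ, 0 ≤ r ∧
    p.1 = c - d + r • z ∧ σ * ‖c‖ + σ * ‖d‖ - r * ‖z‖ ≤ p.2} with hDm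
  obtain ⟨g, hg1, hg2⟩ := helper_sublinear Dm
    ⟨0, coneOf_zero hx₁, 0, coneOf_zero hx₂, 0, le_rfl, by simp, by simp⟩
    (by
      rintro p ⟨c, hc, d, hd, r, hr, hp1, hp2⟩ q ⟨c', hc', d', hd', r', hr', hq1, hq2⟩
      refine ⟨c + c', coneOf_add hc₁ hc hc', d + d', coneOf_add hc₂ hd hd', r + r',
        by linarith, ?_, ?_⟩
      · rw [Prod.fst_add, hp1, hq1, add_smul]; abel
      · rw [Prod.snd_add]
        have t1 := mul_le_mul_of_nonneg_left (norm_add_le c c') hσ.le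
        have t2 := mul_le_mul_of_nonneg_left (norm_add_le d d') hσ.le
        have e : σ * (‖c‖ + ‖c'‖) = σ * ‖c‖ + σ * ‖c'‖ := by ring
        have e' : σ * (‖d‖ + ‖d'‖) = σ * ‖d‖ + σ * ‖d'‖ := by ring
        rw [e] at t1
        rw [e'] at t2
        linarith)
    (by
      rintro s hs p ⟨c, hc, d, hd, r, hr, hp1, hp2⟩
      refine ⟨s • c, coneOf_smul hs.le hc, s • d, coneOf_smul hs.le hd, s * r,
        mul_nonneg hs.le hr, ?_, ?_⟩
      · rw [Prod.smul_fst, hp1, smul_add, smul_sub, smul_smul]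
      · rw [Prod.smul_snd, smul_eq_mul]
        simp only [norm_smul, Real.norm_eq_abs, abs_of_pos hs]
        have t1 := mul_le_mul_of_nonneg_left hp2 hs.le
        have e : s * (σ * ‖c‖ + σ * ‖d‖ - r * ‖z‖)
            = σ * (s * ‖c‖) + σ * (s * ‖d‖) - s * r * ‖z‖ := by ring
        rw [e] at t1
        linarith)
    (by
      rintro p ⟨c, hc, d, hd, r, hr, hp1, hp2⟩
      have h := hstar2 c hc d hd r hr
      rw [← hp1] at h
      linarith)
  have hgz : ‖z‖ ≤ g z := by
    have := hg2 (z, -‖z‖)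
      ⟨0, coneOf_zero hx₁, 0, coneOf_zero hx₂, 1, zero_le_one, by simp, by simp⟩
    simpa using this
  have hgnorm : ‖g‖ = 1 := by
    refine le_antisymm hg1 ?_
    have h := g.le_opNorm z
    rw [Real.norm_eq_abs] at h
    nlinarith [le_abs_self (g z)]
  have hng1 : ∀ x ∈ Ω₁, (-g) (x - x₁) ≤ σ * ‖x - x₁‖ := by
    intro x hx
    have := hg2 (x - x₁, σ * ‖x - x₁‖)
      ⟨x - x₁, coneOf_self hx, 0, coneOf_zero hx₂, 0, le_rfl, by simp, by simp⟩
    dsimp only at this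
    simp only [ContinuousLinearMap.neg_apply]
    linarith [this]
  have hng2 : ∀ y ∈ Ω₂, g (y - x₂) ≤ σ * ‖y - x₂‖ := by
    intro y hy
    have := hg2 (-(y - x₂), σ * ‖y - x₂‖)
      ⟨0, coneOf_zero hx₁, y - x₂, coneOf_self hy, 0, le_rfl, by simp, by simp⟩
    dsimp only at this
    rw [map_neg] at this
    linarith
  obtain ⟨u₁, hu₁a, hu₁b⟩ := key_normal hc₁ hx₁ (-g) hσ hng1
  obtain ⟨u₂, hu₂a, hu₂b⟩ := key_normal hc₂ hx₂ g hσ hng2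
  exact ⟨x₁, ⟨Metric.mem_closedBall.mpr hd1, hx₁⟩, x₂, ⟨Metric.mem_closedBall.mpr hd2, hx₂⟩,
    -g, g, neg_add_cancel g, by rw [norm_neg]; exact hgnorm, hgnorm,
    ⟨u₁, hu₁a, by rw [hσdef] at hu₁b; linarith⟩,
    ⟨u₂, hu₂a, by rw [hσdef] at hu₂b; linarith⟩⟩
end

section
/- Bishop–Phelps theorem via extremality: Let Ω be a nonempty closed convex subset of a Banach space X. Then the set of support points of Ω is dense in the boundary of Ω. (A point x̄ ∈ Ω is a support point if there exists a nonzero continuous linear functional x* attaining its supremum over Ω at x̄.) -/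
/-!
Separate a point `y ∉ Ω` close to `x ∈ frontier Ω` from `Ω` by a functional `f`, so that `f` is
almost maximal on `Ω` at `x`. Ekeland's principle for `f` restricted to `Ω`, with constant
`l = ‖f‖ / 2`, yields a point `xb` near `x` such that `Ω - xb` misses the open convex cone
`{v | l * ‖v‖ < f v}`, which is nonempty because `l < ‖f‖`. Separating that cone from `Ω - xb`
gives a nonzero functional supporting `Ω` at `xb`.
-/

open Set Filter Topology

namespace Ekeland

variable {α : Type*} [MetricSpace α] {φ : α → ℝ} {l : ℝ} {a b z : α}

/-- `z ∈ above φ l a` says `a ≼ z` in the Bishop–Phelps order of `φ` with slope `l`. -/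
def above (φ : α → ℝ) (l : ℝ) (a : α) : Set α := {z | φ a + l * dist z a ≤ φ z}

theorem self_mem_above : a ∈ above φ l a := by simp [above]

theorem above_subset_above (hl : 0 ≤ l) (hb : b ∈ above φ l a) : above φ l b ⊆ above φ l a := by
  intro z hz
  have := dist_triangle z b a
  simp only [above, mem_ofPred_eq] at hb hz ⊢
  nlinarith

theorem isClosed_above (hφ : Continuous φ) : IsClosed (above φ l a) :=
  isClosed_le (by fun_prop) hφ

noncomputable def gap (φ : α → ℝ) (l : ℝ) (a : α) : ℝ := sSup (φ '' above φ l a) - φ a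

theorem mul_dist_le_gap (hφ : BddAbove (range φ)) (hz : z ∈ above φ l a) :
    l * dist z a ≤ gap φ l a := by
  have : φ z ≤ sSup (φ '' above φ l a) :=
    le_csSup (hφ.mono (image_subset_range _ _)) (mem_image_of_mem φ hz)
  have hz' : φ a + l * dist z a ≤ φ z := hz
  unfold gap; linarith

theorem gap_nonneg (hφ : BddAbove (range φ)) : 0 ≤ gap φ l a := by
  simpa using mul_dist_le_gap (l := l) hφ (self_mem_above (a := a))

theorem gap_le_of_mem_above (hl : 0 ≤ l) (hφ : BddAbove (range φ)) (hb : b ∈ above φ l a) :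
    gap φ l b ≤ sSup (φ '' above φ l a) - φ b := by
  unfold gap
  linarith [csSup_le_csSup (hφ.mono (image_subset_range _ _))
    ⟨φ b, mem_image_of_mem φ self_mem_above⟩ (image_mono (above_subset_above hl hb))]

theorem exists_mem_above_gap_le_half (hl : 0 ≤ l) (hφ : BddAbove (range φ)) (a : α) :
    ∃ b ∈ above φ l a, gap φ l b ≤ gap φ l a / 2 := by
  rcases (gap_nonneg (l := l) (a := a) hφ).eq_or_lt with h | h
  · exact ⟨a, self_mem_above, by linarith⟩
  · obtain ⟨_, ⟨b, hb, rfl⟩, hlt⟩ := exists_lt_of_lt_csSup ⟨φ a, mem_image_of_mem φ self_mem_above⟩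
      (sub_lt_self (sSup (φ '' above φ l a)) (half_pos h))
    refine ⟨b, hb, (gap_le_of_mem_above hl hφ hb).trans ?_⟩
    unfold gap at hlt ⊢
    linarith

theorem exists_mem_above_forall_le [CompleteSpace α] (hφ : Continuous φ)
    (hbdd : BddAbove (range φ)) (hl : 0 < l) (x : α) :
    ∃ xb ∈ above φ l x, ∀ z, φ z ≤ φ xb + l * dist z xb := by
  -- Each step nearly maximizes `φ` on the current upper set, so the upper sets shrink to a point
  -- whose own upper set is a singleton.
  choose next hnext_mem hnext_gap using exists_mem_above_gap_le_half hl.le hbdd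
  set u : ℕ → α := fun n => next^[n] x with hu
  have hu_succ : ∀ n, u (n + 1) = next (u n) := fun n => Function.iterate_succ_apply' ..
  have hanti : Antitone fun n => above φ l (u n) := antitone_nat_of_succ_le fun n => by
    rw [hu_succ]; exact above_subset_above hl.le (hnext_mem _)
  set r : ℕ → ℝ := fun n => gap φ l x / l / 2 ^ n
  have hr0 : Tendsto r atTop (𝓝 0) := by
    simpa using tendsto_const_nhds.div_atTop (tendsto_pow_atTop_atTop_of_one_lt one_lt_two)
  have hgap : ∀ n, gap φ l (u n) ≤ gap φ l x / 2 ^ n := by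
    intro n
    induction n with
    | zero => simp [hu]
    | succ n ih =>
      rw [hu_succ, pow_succ, ← div_div]
      exact (hnext_gap _).trans (by linarith)
  have hball : ∀ n, ∀ z ∈ above φ l (u n), dist z (u n) ≤ r n := fun n z hz => by
    show _ ≤ gap φ l x / l / 2 ^ n
    rw [div_right_comm, le_div_iff₀' hl]
    exact (mul_dist_le_gap hbdd hz).trans (hgap n)
  have hmem : ∀ n m, n ≤ m → u m ∈ above φ l (u n) := fun n m h => hanti h self_mem_above
  have htendsto : ∀ z, (∀ n, z ∈ above φ l (u n)) → Tendsto u atTop (𝓝 z) := fun z hz =>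
    tendsto_iff_dist_tendsto_zero.2 <| squeeze_zero (fun _ => dist_nonneg)
      (fun n => by rw [dist_comm]; exact hball n z (hz n)) hr0
  have hcauchy : CauchySeq u := by
    refine cauchySeq_of_le_tendsto_0 (fun N => 2 * r N) (fun n m N hn hm => ?_)
      (by simpa using hr0.const_mul 2)
    calc dist (u n) (u m) ≤ dist (u n) (u N) + dist (u m) (u N) := dist_triangle_right _ _ _
      _ ≤ 2 * r N := by linarith [hball N _ (hmem N n hn), hball N _ (hmem N m hm)]
  obtain ⟨xb, hxb⟩ := cauchySeq_tendsto_of_complete hcauchy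
  have hxb_mem : ∀ n, xb ∈ above φ l (u n) := fun n =>
    (isClosed_above hφ).mem_of_tendsto hxb ((eventually_ge_atTop n).mono (hmem n))
  refine ⟨xb, hxb_mem 0, fun z => ?_⟩
  by_contra! hz
  have hz_mem : z ∈ above φ l xb := hz.le
  have hzx : z = xb := tendsto_nhds_unique
    (htendsto z fun n => above_subset_above hl.le (hxb_mem n) hz_mem) hxb
  subst hzx
  simp at hz

end Ekeland

section Separation

variable {E : Type*} [AddCommGroup E] [Module ℝ E] [TopologicalSpace E] [IsTopologicalAddGroup E]
  [ContinuousSMul ℝ E]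

theorem ConvexCone.exists_ne_zero_forall_nonpos_of_disjoint (K : ConvexCone ℝ E)
    (hKo : IsOpen (K : Set E)) (hKne : (K : Set E).Nonempty) {C : Set E} (hC : Convex ℝ C)
    (h0 : (0 : E) ∈ C) (hKC : Disjoint (K : Set E) C) :
    ∃ F : StrongDual ℝ E, F ≠ 0 ∧ ∀ c ∈ C, F c ≤ 0 := by
  obtain ⟨F, u, hFK, hFC⟩ := geometric_hahn_banach_open K.convex hKo hC hKC
  obtain ⟨v, hv⟩ := hKne
  have hu : u ≤ 0 := by simpa using hFC 0 h0
  have hFv : F v < 0 := (hFK v hv).trans_le hu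
  -- Otherwise the cone point `(u / F v) • v` would have `F`-value exactly `u`.
  have hu0 : 0 ≤ u := by
    by_contra! hu0
    have hr : 0 < u / F v := div_pos_of_neg_of_neg hu0 hFv
    have := hFK _ (K.smul_mem hr hv)
    rw [map_smul, smul_eq_mul, div_mul_cancel₀ _ hFv.ne] at this
    exact this.false
  exact ⟨-F, fun h => by simp [neg_eq_zero.1 h] at hFv,
    fun c hc => by simpa using hu0.trans (hFC c hc)⟩

end Separation

section BishopPhelps

variable {E : Type*} [NormedAddCommGroup E] [NormedSpace ℝ E]

def bishopPhelpsCone (f : E →L[ℝ] ℝ) {l : ℝ} (hl : 0 ≤ l) : ConvexCone ℝ E where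
  carrier := {v | l * ‖v‖ < f v}
  smul_mem' c hc v hv := by
    simp only [mem_ofPred_eq, map_smul, smul_eq_mul, norm_smul, Real.norm_of_nonneg hc.le] at hv ⊢
    nlinarith
  add_mem' v hv w hw := by
    simp only [mem_ofPred_eq, map_add] at hv hw ⊢
    nlinarith [norm_add_le v w]

theorem isOpen_bishopPhelpsCone (f : E →L[ℝ] ℝ) {l : ℝ} (hl : 0 ≤ l) :
    IsOpen (bishopPhelpsCone f hl : Set E) :=
  isOpen_lt (by fun_prop) f.continuous

theorem bishopPhelpsCone_nonempty (f : E →L[ℝ] ℝ) {l : ℝ} (hl : 0 ≤ l) (hlf : l < ‖f‖) :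
    (bishopPhelpsCone f hl : Set E).Nonempty := by
  obtain ⟨v, hv1, hlv⟩ := f.exists_lt_apply_of_lt_opNorm hlf
  have hle : l * ‖v‖ ≤ l := mul_le_of_le_one_right hl hv1.le
  rcases le_or_gt 0 (f v) with h | h
  · exact ⟨v, by change l * ‖v‖ < f v; rw [Real.norm_of_nonneg h] at hlv; linarith⟩
  · refine ⟨-v, ?_⟩
    change l * ‖-v‖ < f (-v)
    rw [Real.norm_of_nonpos h.le] at hlv
    rw [norm_neg, map_neg]
    linarith

theorem exists_support_of_forall_le_add_mul_norm {Ω : Set E} (hc : Convex ℝ Ω) (f : E →L[ℝ] ℝ)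
    {l : ℝ} (hl : 0 ≤ l) (hlf : l < ‖f‖) {xb : E} (hxb : xb ∈ Ω)
    (hmax : ∀ z ∈ Ω, f z ≤ f xb + l * ‖z - xb‖) :
    ∃ F : E →L[ℝ] ℝ, F ≠ 0 ∧ ∀ z ∈ Ω, F z ≤ F xb := by
  have hdisj : Disjoint (bishopPhelpsCone f hl : Set E) ((fun v => xb + v) ⁻¹' Ω) :=
    disjoint_left.2 fun v (hv : l * ‖v‖ < f v) hvΩ => by
      have := hmax _ hvΩ
      simp only [map_add, add_sub_cancel_left] at this
      linarith
  obtain ⟨F, hF0, hF⟩ := (bishopPhelpsCone f hl).exists_ne_zero_forall_nonpos_of_disjoint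
    (isOpen_bishopPhelpsCone f hl) (bishopPhelpsCone_nonempty f hl hlf)
    (hc.translate_preimage_right xb) (by simpa using hxb) hdisj
  refine ⟨F, hF0, fun z hz => ?_⟩
  have := hF (z - xb) (by simpa using hz)
  rwa [map_sub, sub_nonpos] at this

theorem exists_support_point_mul_norm_sub_le [CompleteSpace E] {Ω : Set E} (hcl : IsClosed Ω)
    (hc : Convex ℝ Ω) (f : E →L[ℝ] ℝ) {l c : ℝ} (hl : 0 < l) (hlf : l < ‖f‖)
    (hbd : ∀ z ∈ Ω, f z ≤ c) {x : E} (hx : x ∈ Ω) :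
    ∃ xb ∈ Ω, l * ‖xb - x‖ ≤ c - f x ∧ ∃ F : E →L[ℝ] ℝ, F ≠ 0 ∧ ∀ z ∈ Ω, F z ≤ F xb := by
  have := hcl.completeSpace_coe
  obtain ⟨⟨xb, hxbΩ⟩, hxb, hmax⟩ := Ekeland.exists_mem_above_forall_le (φ := fun z : Ω => f z)
    (by fun_prop) ⟨c, by rintro _ ⟨z, rfl⟩; exact hbd z z.2⟩ hl ⟨x, hx⟩
  simp only [Ekeland.above, mem_ofPred_eq, Subtype.dist_eq, dist_eq_norm] at hxb
  refine ⟨xb, hxbΩ, by linarith [hbd xb hxbΩ], exists_support_of_forall_le_add_mul_norm hc f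
    hl.le hlf hxbΩ fun z hz => by simpa [Subtype.dist_eq, dist_eq_norm] using hmax ⟨z, hz⟩⟩

end BishopPhelps

theorem bishop_phelps_support_points_dense_general {X : Type*} [NormedAddCommGroup X]
    [NormedSpace ℝ X] [CompleteSpace X] (Ω : Set X)
    (hcl : IsClosed Ω) (hc : Convex ℝ Ω) :
    frontier Ω ⊆
      closure {xb : X | xb ∈ Ω ∧ ∃ f : X →L[ℝ] ℝ, f ≠ 0 ∧ ∀ x ∈ Ω, f x ≤ f xb} := by
  intro x hx
  have hxΩ : x ∈ Ω := hcl.frontier_subset hx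
  refine Metric.mem_closure_iff.2 fun ε hε => ?_
  obtain ⟨y, hyΩ, hxy⟩ := Metric.mem_closure_iff.1
    (frontier_subset_closure (frontier_compl Ω ▸ hx)) (ε / 2) (half_pos hε)
  rw [dist_comm, dist_eq_norm] at hxy
  obtain ⟨f, t, hfΩ, hfy⟩ := geometric_hahn_banach_closed_point hc hcl hyΩ
  have hfyx : f y - f x ≤ ‖f‖ * ‖y - x‖ :=
    calc f y - f x = f (y - x) := (map_sub ..).symm
      _ ≤ ‖f (y - x)‖ := Real.le_norm_self _
      _ ≤ ‖f‖ * ‖y - x‖ := f.le_opNorm _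
  have hf : 0 < ‖f‖ := pos_of_mul_pos_left (by linarith [hfΩ x hxΩ]) (norm_nonneg (y - x))
  obtain ⟨xb, hxbΩ, hxb, hsupp⟩ := exists_support_point_mul_norm_sub_le hcl hc f (half_pos hf)
    (half_lt_self hf) (fun z hz => (hfΩ z hz).le) hxΩ
  refine ⟨xb, ⟨hxbΩ, hsupp⟩, ?_⟩
  rw [dist_comm, dist_eq_norm]
  have : ‖f‖ / 2 * ‖xb - x‖ < ‖f‖ / 2 * ε := by nlinarith
  exact lt_of_mul_lt_mul_left this (half_pos hf).le

theorem bishop_phelps_support_points_dense {X : Type*} [NormedAddCommGroup X]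
    [NormedSpace ℝ X] [CompleteSpace X] (Ω : Set X) (hne : Ω.Nonempty)
    (hcl : IsClosed Ω) (hc : Convex ℝ Ω) :
    frontier Ω ⊆
      closure {xb : X | xb ∈ Ω ∧ ∃ f : X →L[ℝ] ℝ, f ≠ 0 ∧ ∀ x ∈ Ω, f x ≤ f xb} :=
  bishop_phelps_support_points_dense_general Ω hcl hc
end

section
/- Normal cone intersection rule: Let Ω₁, Ω₂ be convex subsets of a normed space X and x̄ ∈ Ω₁ ∩ Ω₂. Suppose there exists a bounded convex neighborhood V of x̄ such that 0 ∈ int(Ω₁ − (Ω₂ ∩ V)). Then N(x̄; Ω₁ ∩ Ω₂) = N(x̄; Ω₁) + N(x̄; Ω₂). -/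
/-!
Since `V` is bounded it lies in a ball `B(x₀, R)`, so the qualification condition holds for
`B := Ω₂ ∩ B(x₀, R)`, and `N(x₀; B) = N(x₀; Ω₂)` because `B` agrees with `Ω₂` near `x₀`.
For `φ ∈ N(x₀; Ω₁ ∩ B)` the convex set `C := {(u - v, l) | u ∈ Ω₁, v ∈ B, l ≤ φ (u - x₀)}`
in `X × ℝ` misses the ray `{0} × (0, ∞)`, and it has interior points `(0, l)` because `B` is
bounded and `0 ∈ int (Ω₁ - B)`. A functional separating `C` from the ray, normalized to
`F (x, l) = ψ x + l`, gives `φ + ψ ∈ N(x₀; Ω₁)` and `-ψ ∈ N(x₀; B)`.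
-/

open Set Filter Topology Pointwise Bornology

section TopologicalVectorSpace

variable {E : Type*} [AddCommGroup E] [Module ℝ E] [TopologicalSpace E]

def normalCone (Ω : Set E) (x : E) : Set (E →L[ℝ] ℝ) :=
  {f | ∀ y ∈ Ω, f (y - x) ≤ 0}

theorem normalCone_anti {Ω Ω' : Set E} (h : Ω ⊆ Ω') (x : E) :
    normalCone Ω' x ⊆ normalCone Ω x :=
  fun _ hf y hy => hf y (h hy)

theorem add_normalCone_subset_normalCone_inter (Ω₁ Ω₂ : Set E) (x : E) :
    normalCone Ω₁ x + normalCone Ω₂ x ⊆ normalCone (Ω₁ ∩ Ω₂) x := by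
  rintro _ ⟨f₁, hf₁, f₂, hf₂, rfl⟩ y hy
  exact add_nonpos (hf₁ y hy.1) (hf₂ y hy.2)

theorem normalCone_inter_of_mem_nhds [IsTopologicalAddGroup E] [ContinuousSMul ℝ E]
    {Ω U : Set E} {x : E} (hΩ : Convex ℝ Ω) (hx : x ∈ Ω) (hU : U ∈ 𝓝 x) :
    normalCone (Ω ∩ U) x = normalCone Ω x := by
  refine Subset.antisymm (fun f hf y hy => ?_) (normalCone_anti inter_subset_left x)
  have hseg : Tendsto (fun t : ℝ => x + t • (y - x)) (𝓝[>] 0) (𝓝 x) := by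
    have hcont : Continuous fun t : ℝ => x + t • (y - x) := by fun_prop
    simpa using (hcont.tendsto 0).mono_left nhdsWithin_le_nhds
  obtain ⟨t, htU, ht⟩ := ((hseg.eventually hU).and (Ioc_mem_nhdsGT one_pos)).exists
  have hf_seg := hf _ ⟨hΩ.add_smul_sub_mem hx hy ⟨ht.1.le, ht.2⟩, htU⟩
  rw [add_sub_cancel_left, map_smul, smul_eq_mul] at hf_seg
  exact nonpos_of_mul_nonpos_right hf_seg ht.1

theorem exists_nonpos_of_disjoint_vertical_ray [IsTopologicalAddGroup E] [ContinuousSMul ℝ E]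
    {C : Set (E × ℝ)} (hC : Convex ℝ C) (hCint : (interior C).Nonempty)
    (hdisj : Disjoint (interior C) ({0} ×ˢ Ioi 0)) :
    ∃ F : E × ℝ →L[ℝ] ℝ, (∀ p ∈ C, F p ≤ 0) ∧ ∀ p ∈ interior C, F p < 0 := by
  obtain ⟨F, u, hlt, hge⟩ := geometric_hahn_banach_open hC.interior isOpen_interior
    ((convex_singleton 0).prod (convex_Ioi 0)) hdisj
  have hu : u ≤ 0 := by
    have h0 : ((0 : E), (0 : ℝ)) ∈ closure ({0} ×ˢ Ioi (0 : ℝ)) := by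
      rw [closure_prod_eq, closure_Ioi]
      exact ⟨subset_closure rfl, le_refl (0 : ℝ)⟩
    have hF0 : u ≤ F (0, 0) := closure_minimal hge (isClosed_le continuous_const F.continuous) h0
    rwa [show F (0, 0) = 0 from map_zero F] at hF0
  refine ⟨F, fun p hp => ?_, fun p hp => (hlt p hp).trans_le hu⟩
  have hp' : p ∈ closure (interior C) := by
    rw [hC.closure_interior_eq_closure_of_nonempty_interior hCint]
    exact subset_closure hp
  have hFp : F p ≤ u :=
    closure_minimal (fun q hq => (hlt q hq).le) (isClosed_Iic.preimage F.continuous) hp'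
  exact hFp.trans hu

variable {Ω B : Set E} {x₀ : E} {φ : E →L[ℝ] ℝ}

def hypographSub (Ω B : Set E) (x₀ : E) (φ : E →L[ℝ] ℝ) : Set (E × ℝ) :=
  {p | p.1 ∈ Ω ∧ p.2 ≤ φ (p.1 - x₀)} - B ×ˢ {0}

theorem mk_sub_mem_hypographSub {u v : E} {l : ℝ} (hu : u ∈ Ω) (hv : v ∈ B)
    (hl : l ≤ φ (u - x₀)) : (u - v, l) ∈ hypographSub Ω B x₀ φ :=
  ⟨(u, l), ⟨hu, hl⟩, (v, 0), ⟨hv, rfl⟩, by simp⟩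

theorem convex_hypographSub (hΩ : Convex ℝ Ω) (hB : Convex ℝ B) :
    Convex ℝ (hypographSub Ω B x₀ φ) := by
  have hφ : ConcaveOn ℝ Ω fun x => φ (x - x₀) := by
    have hfun : (fun x => φ (x - x₀)) = ⇑(φ : E →ₗ[ℝ] ℝ) + fun _ => -φ x₀ := by
      ext x
      simp [sub_eq_add_neg]
    rw [hfun]
    exact ((φ : E →ₗ[ℝ] ℝ).concaveOn hΩ).add_const (-φ x₀)
  exact hφ.convex_hypograph.sub (hB.prod (convex_singleton 0))

theorem disjoint_hypographSub (hφ : φ ∈ normalCone (Ω ∩ B) x₀) :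
    Disjoint (hypographSub Ω B x₀ φ) ({0} ×ˢ Ioi 0) := by
  rw [disjoint_left]
  rintro _ ⟨⟨u, l⟩, ⟨hu, hl⟩, ⟨v, _⟩, ⟨hv, rfl⟩, rfl⟩ ⟨huv, hpos⟩
  simp only [Prod.mk_sub_mk, mem_singleton_iff, sub_eq_zero, sub_zero, mem_Ioi] at huv hpos
  subst huv
  linarith [hφ u ⟨hu, hv⟩]

end TopologicalVectorSpace

section NormedSpace

variable {X : Type*} [NormedAddCommGroup X] [NormedSpace ℝ X]
  {Ω B : Set X} {x₀ : X} {φ : X →L[ℝ] ℝ}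

theorem exists_mk_zero_mem_interior_hypographSub (hB : IsBounded B)
    (h0 : (0 : X) ∈ interior (Ω - B)) :
    ∃ l, ((0 : X), l) ∈ interior (hypographSub Ω B x₀ φ) := by
  obtain ⟨K, hK⟩ : BddBelow (φ '' (Metric.ball 0 1 + B - {x₀})) :=
    (φ.lipschitz.isBounded_image ((Metric.isBounded_ball.add hB).sub isBounded_singleton)).bddBelow
  refine ⟨K - 1, mem_interior.2 ⟨(interior (Ω - B) ∩ Metric.ball 0 1) ×ˢ Iio K, ?_,
    (isOpen_interior.inter Metric.isOpen_ball).prod isOpen_Iio, ⟨⟨h0, by simp⟩, by simp⟩⟩⟩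
  rintro ⟨w, l⟩ ⟨⟨hw, hw1⟩, hl⟩
  obtain ⟨u, hu, v, hv, rfl⟩ := interior_subset hw
  refine mk_sub_mem_hypographSub hu hv (hl.trans_le (hK ⟨u - x₀, ?_, rfl⟩)).le
  exact sub_mem_sub (by simpa using add_mem_add hw1 hv) rfl

theorem normalCone_inter_subset_add_of_isBounded (hΩ : Convex ℝ Ω) (hB : Convex ℝ B)
    (hBb : IsBounded B) (hx₀ : x₀ ∈ Ω ∩ B) (h0 : (0 : X) ∈ interior (Ω - B)) :
    normalCone (Ω ∩ B) x₀ ⊆ normalCone Ω x₀ + normalCone B x₀ := by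
  intro φ hφ
  obtain ⟨l₀, hl₀⟩ := exists_mk_zero_mem_interior_hypographSub (x₀ := x₀) (φ := φ) hBb h0
  obtain ⟨F, hF, hF₀⟩ := exists_nonpos_of_disjoint_vertical_ray (convex_hypographSub hΩ hB)
    ⟨_, hl₀⟩ ((disjoint_hypographSub hφ).mono_left interior_subset)
  have hF_mk (x : X) (l : ℝ) : F (x, l) = F (x, 0) + l * F (0, 1) := by
    rw [← smul_eq_mul, ← map_smul, ← map_add]
    simp
  -- `(0, -1) ∈ C` gives `F (0, 1) ≥ 0`, the interior point `(0, l₀)` gives `F (0, 1) ≠ 0`.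
  have hβ : 0 < F (0, 1) := by
    have h₁ := hF _ (mk_sub_mem_hypographSub (l := -1) hx₀.1 hx₀.2 (by simp))
    have h₂ := hF₀ _ hl₀
    rw [sub_self] at h₁
    rw [hF_mk, show F (0, 0) = 0 from map_zero F, zero_add] at h₁ h₂
    refine lt_of_le_of_ne (by linarith) ?_
    rintro hβ0
    simp [← hβ0] at h₂
  set ψ : X →L[ℝ] ℝ := (F (0, 1))⁻¹ • F.comp (ContinuousLinearMap.inl ℝ X ℝ)
  have hψ {x : X} {l : ℝ} (hxl : (x, l) ∈ hypographSub Ω B x₀ φ) : ψ x + l ≤ 0 := by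
    have hdiv := div_nonpos_of_nonpos_of_nonneg (hF _ hxl) hβ.le
    rwa [hF_mk, add_div, mul_div_cancel_right₀ _ hβ.ne', div_eq_inv_mul] at hdiv
  refine ⟨φ + ψ, fun x hx => ?_, -ψ, fun v hv => ?_, add_neg_cancel_right φ ψ⟩
  · simpa [add_comm] using hψ (mk_sub_mem_hypographSub hx hx₀.2 le_rfl)
  · have := hψ (mk_sub_mem_hypographSub (l := 0) hx₀.1 hv (by simp))
    rw [← neg_sub, map_neg, add_zero] at this
    simpa using this

end NormedSpace

theorem normal_cone_intersection_rule_general {X : Type*} [NormedAddCommGroup X]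
    [NormedSpace ℝ X] (Ω₁ Ω₂ : Set X) (hc₁ : Convex ℝ Ω₁) (hc₂ : Convex ℝ Ω₂)
    (xb : X) (hxb : xb ∈ Ω₁ ∩ Ω₂)
    (V : Set X)
    (hVbdd : Bornology.IsBounded V)
    (hqc : (0 : X) ∈ interior (Ω₁ - Ω₂ ∩ V)) :
    {f : X →L[ℝ] ℝ | ∀ x ∈ Ω₁ ∩ Ω₂, f (x - xb) ≤ 0} =
      {f : X →L[ℝ] ℝ | ∀ x ∈ Ω₁, f (x - xb) ≤ 0} +
        {f : X →L[ℝ] ℝ | ∀ x ∈ Ω₂, f (x - xb) ≤ 0} := by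
  change normalCone (Ω₁ ∩ Ω₂) xb = normalCone Ω₁ xb + normalCone Ω₂ xb
  obtain ⟨R, hR, hVR⟩ := hVbdd.subset_ball_lt 0 xb
  have h0 : (0 : X) ∈ interior (Ω₁ - Ω₂ ∩ Metric.ball xb R) :=
    interior_mono (sub_subset_sub_left (inter_subset_inter_right _ hVR)) hqc
  refine Subset.antisymm ?_ (add_normalCone_subset_normalCone_inter Ω₁ Ω₂ xb)
  calc normalCone (Ω₁ ∩ Ω₂) xb
      ⊆ normalCone (Ω₁ ∩ (Ω₂ ∩ Metric.ball xb R)) xb :=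
        normalCone_anti (inter_subset_inter_right _ inter_subset_left) xb
    _ ⊆ normalCone Ω₁ xb + normalCone (Ω₂ ∩ Metric.ball xb R) xb :=
        normalCone_inter_subset_add_of_isBounded hc₁ (hc₂.inter (convex_ball xb R))
          (Metric.isBounded_ball.subset inter_subset_right)
          ⟨hxb.1, hxb.2, Metric.mem_ball_self hR⟩ h0
    _ = normalCone Ω₁ xb + normalCone Ω₂ xb := by
        rw [normalCone_inter_of_mem_nhds hc₂ hxb.2 (Metric.ball_mem_nhds xb hR)]

theorem normal_cone_intersection_rule {X : Type*} [NormedAddCommGroup X]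
    [NormedSpace ℝ X] (Ω₁ Ω₂ : Set X) (hc₁ : Convex ℝ Ω₁) (hc₂ : Convex ℝ Ω₂)
    (xb : X) (hxb : xb ∈ Ω₁ ∩ Ω₂)
    (V : Set X) (hV : V ∈ nhds xb) (hVconv : Convex ℝ V)
    (hVbdd : Bornology.IsBounded V)
    (hqc : (0 : X) ∈ interior (Ω₁ - Ω₂ ∩ V)) :
    {f : X →L[ℝ] ℝ | ∀ x ∈ Ω₁ ∩ Ω₂, f (x - xb) ≤ 0} =
      {f : X →L[ℝ] ℝ | ∀ x ∈ Ω₁, f (x - xb) ≤ 0} +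
        {f : X →L[ℝ] ℝ | ∀ x ∈ Ω₂, f (x - xb) ≤ 0} :=
  normal_cone_intersection_rule_general Ω₁ Ω₂ hc₁ hc₂ xb hxb V hVbdd hqc
end

section
/- Let X be a reflexive Banach space, Ω₁, Ω₂ ⊆ X closed convex sets with int(Ω₁ − Ω₂) ≠ ∅ and 0 ∈ core(Ω₁ − Ω₂), and let x̄ ∈ Ω₁ ∩ Ω₂. Then for every r > 0 one has 0 ∈ int(Ω₁ − (Ω₂ ∩ B(x̄; r))), i.e., the bounded extremality qualification condition holds at x̄. -/
/-!
Put `K = Ω₂ ∩ B(x̄; r)` and `C = Ω₁ - K`. Pulling a representation `γv = a - b` towards `x̄`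
along the segments `[x̄, a]` and `[x̄, b]` puts a positive multiple of every direction `v` into `C`,
so the closed convex set `closure C` is absorbent and, by Baire, a neighbourhood of `0`.
Because `K` is bounded the closure can be dropped at the price of half the radius: repeated
approximation writes every small `u` as `∑ 2⁻ᵏ⁻¹ (aₖ - bₖ)` with `aₖ ∈ Ω₁`, `bₖ ∈ K`; the series
`∑ 2⁻ᵏ⁻¹ bₖ` converges since `K` is bounded, hence so does `∑ 2⁻ᵏ⁻¹ aₖ`, and closed convex sets
contain the sums of their convex series.
-/

open Pointwise Set Filter Topology Metric

theorem absorbent_iff_eventually_nhds_zero {𝕜 E : Type*} [NontriviallyNormedField 𝕜]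
    [AddCommGroup E] [Module 𝕜 E] {s : Set E} :
    Absorbent 𝕜 s ↔ ∀ v : E, ∀ᶠ c : 𝕜 in 𝓝 0, c • v ∈ s := by
  refine ⟨fun h v => ?_, fun h => absorbent_iff_eventually_nhdsNE_zero.2 fun v =>
    (h v).filter_mono nhdsWithin_le_nhds⟩
  simpa only [mapsTo_singleton] using (h.absorbs (x := v)).eventually_nhds_zero h.zero_mem

theorem Convex.absorbent_of_forall_exists_pos_smul_mem {E : Type*} [AddCommGroup E]
    [Module ℝ E] {C : Set E} (hC : Convex ℝ C) (h : ∀ v : E, ∃ t > (0 : ℝ), t • v ∈ C) :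
    Absorbent ℝ C := by
  refine absorbent_iff_eventually_nhds_zero.2 fun v => ?_
  obtain ⟨s, hs, hsv⟩ := h v
  obtain ⟨t, ht, htv⟩ := h (-v)
  have hline : OrdConnected ((· • v) ⁻¹' C) :=
    (hC.is_linear_preimage (IsLinearMap.isLinearMap_smul' v)).ordConnected
  filter_upwards [Icc_mem_nhds (neg_neg_of_pos ht) hs] with c hc
  exact hline.out (by simpa only [mem_preimage, neg_smul, ← smul_neg] using htv) hsv hc

section Baire

variable {E : Type*} [AddCommGroup E] [Module ℝ E] [TopologicalSpace E] [ContinuousSMul ℝ E]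
  [BaireSpace E] {S : Set E}

theorem IsClosed.interior_nonempty_of_absorbent (hS : IsClosed S) (habs : Absorbent ℝ S) :
    (interior S).Nonempty := by
  have hcover : ⋃ n : ℕ, ((n : ℝ) + 1) • S = univ := by
    refine eq_univ_of_forall fun v => mem_iUnion.2 ?_
    obtain ⟨n, hn⟩ := (tendsto_one_div_add_atTop_nhds_zero_nat.eventually
      (absorbent_iff_eventually_nhds_zero.1 habs v)).exists
    exact ⟨n, (mem_smul_set_iff_inv_smul_mem₀ (by positivity) _ _).2
      (by simpa only [one_div] using hn)⟩
  obtain ⟨n, hn⟩ := nonempty_interior_of_iUnion_of_closed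
    (fun n : ℕ => hS.smul_of_ne_zero (by positivity : (n : ℝ) + 1 ≠ 0)) hcover
  rw [interior_smul₀ (by positivity)] at hn
  exact smul_set_nonempty.1 hn

theorem Convex.zero_mem_interior_of_isClosed_of_absorbent [IsTopologicalAddGroup E]
    (hC : Convex ℝ S) (hS : IsClosed S) (habs : Absorbent ℝ S) : (0 : E) ∈ interior S := by
  obtain ⟨x, hx⟩ := hS.interior_nonempty_of_absorbent habs
  obtain ⟨ε, hεx, hε : 0 < ε⟩ := (((absorbent_iff_eventually_nhds_zero.1 habs (-x)).filter_mono
    nhdsWithin_le_nhds).and (self_mem_nhdsWithin : Ioi (0 : ℝ) ∈ 𝓝[>] 0)).exists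
  -- `0 = (ε / (1 + ε)) • x + (1 / (1 + ε)) • (ε • -x)` with `x` interior
  convert hC.combo_interior_self_mem_interior hx hεx (a := ε / (1 + ε)) (b := 1 / (1 + ε))
    (by positivity) (by positivity) (by field_simp; ring) using 1
  module

end Baire

theorem Convex.mem_of_hasSum_smul {ι E : Type*} [AddCommGroup E] [Module ℝ E]
    [TopologicalSpace E] [ContinuousSMul ℝ E] {C : Set E} (hC : Convex ℝ C) (hCc : IsClosed C)
    {w : ι → ℝ} {c : ι → E} {x : E} (hw₀ : ∀ i, 0 ≤ w i) (hw : HasSum w 1)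
    (hc : ∀ i, c i ∈ C) (hx : HasSum (fun i => w i • c i) x) : x ∈ C := by
  have hlim : Tendsto (fun s : Finset ι => s.centerMass w c) atTop (𝓝 x) := by
    have := (hw.inv₀ one_ne_zero).smul hx
    rwa [inv_one, one_smul] at this
  refine hCc.mem_of_tendsto hlim ?_
  filter_upwards [hw.eventually (lt_mem_nhds one_pos)] with s hs
  exact hC.centerMass_mem (fun i _ => hw₀ i) hs (fun i _ => hc i)

section Normed

variable {E : Type*} [NormedAddCommGroup E] [NormedSpace ℝ E] [CompleteSpace E]

theorem exists_hasSum_smul_mem_of_ball_subset_closure {D : Set E} {δ : ℝ}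
    (hD : ball (0 : E) δ ⊆ closure D) {u : E} (hu : ‖u‖ < δ / 2) :
    ∃ d : ℕ → E, (∀ k, d k ∈ D) ∧ HasSum (fun k => (2 : ℝ)⁻¹ ^ (k + 1) • d k) u := by
  have hδ : 0 < δ := by linarith [norm_nonneg u]
  have happrox : ∀ y ∈ ball (0 : E) δ, ∃ d ∈ D, dist y d < δ / 2 := fun y hy =>
    Metric.mem_closure_iff.1 (hD hy) _ (half_pos hδ)
  choose! f hfD hfdist using happrox
  -- `y k = 2 ^ (k + 1) • (u - ∑ i < k, 2⁻¹ ^ (i + 1) • f (y i))` is the rescaled residual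
  set y : ℕ → E := fun k => (fun z => (2 : ℝ) • (z - f z))^[k] ((2 : ℝ) • u)
  have hy_zero : y 0 = (2 : ℝ) • u := rfl
  have hy_succ (k : ℕ) : y (k + 1) = (2 : ℝ) • (y k - f (y k)) :=
    Function.iterate_succ_apply' _ _ _
  have hy : ∀ k, y k ∈ ball (0 : E) δ := by
    intro k
    induction k with
    | zero =>
      rw [hy_zero, mem_ball_zero_iff, norm_smul, Real.norm_two]
      exact (lt_div_iff₀' two_pos).1 hu
    | succ k ih =>
      rw [hy_succ, mem_ball_zero_iff, norm_smul, Real.norm_two, ← dist_eq_norm]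
      linarith [hfdist _ ih]
  have hpartial (n : ℕ) : ∑ k ∈ Finset.range n, (2 : ℝ)⁻¹ ^ (k + 1) • f (y k) =
      u - (2 : ℝ)⁻¹ ^ (n + 1) • y n := by
    induction n with
    | zero =>
      rw [Finset.sum_range_zero, hy_zero]
      module
    | succ n ih =>
      rw [Finset.sum_range_succ, ih, hy_succ]
      module
  have hbound (k : ℕ) : ‖(2 : ℝ)⁻¹ ^ (k + 1) • f (y k)‖ ≤ (2 : ℝ)⁻¹ ^ k * δ := by
    have hfy : ‖f (y k)‖ < δ + δ / 2 := by
      have := dist_triangle (f (y k)) (y k) 0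
      rw [dist_zero_right, dist_zero_right, dist_comm] at this
      linarith [mem_ball_zero_iff.1 (hy k), hfdist _ (hy k)]
    rw [norm_smul, norm_pow, norm_inv, Real.norm_two, pow_succ, mul_assoc]
    gcongr
    linarith
  have hsummable : Summable (fun k => (2 : ℝ)⁻¹ ^ (k + 1) • f (y k)) :=
    .of_norm_bounded ((summable_geometric_of_lt_one (r := (2 : ℝ)⁻¹) (by norm_num)
      (by norm_num)).mul_right δ) hbound
  refine ⟨fun k => f (y k), fun k => hfD _ (hy k), hsummable.hasSum_iff_tendsto_nat.2 ?_⟩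
  have hres : Tendsto (fun n => (2 : ℝ)⁻¹ ^ (n + 1) • y n) atTop (𝓝 0) := by
    refine squeeze_zero_norm (fun n => ?_) (by simpa only [zero_mul] using
      ((tendsto_pow_atTop_nhds_zero_of_lt_one (r := (2 : ℝ)⁻¹) (by norm_num)
        (by norm_num)).comp (tendsto_add_atTop_nat 1)).mul_const δ)
    rw [norm_smul, norm_pow, norm_inv, Real.norm_two]
    exact mul_le_mul_of_nonneg_left (mem_ball_zero_iff.1 (hy n)).le (by positivity)
  simpa only [hpartial, sub_zero] using tendsto_const_nhds.sub hres

theorem ball_subset_sub_of_ball_subset_closure_sub {A K : Set E} (hA : Convex ℝ A)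
    (hAc : IsClosed A) (hK : Convex ℝ K) (hKc : IsClosed K) (hKb : Bornology.IsBounded K)
    {δ : ℝ} (h : ball (0 : E) δ ⊆ closure (A - K)) : ball (0 : E) (δ / 2) ⊆ A - K := by
  intro u hu
  obtain ⟨d, hd, hsum⟩ :=
    exists_hasSum_smul_mem_of_ball_subset_closure h (mem_ball_zero_iff.1 hu)
  choose a ha b hb hab using hd
  have hw : HasSum (fun k : ℕ => (2 : ℝ)⁻¹ ^ (k + 1)) 1 := by
    convert hasSum_geometric_two' 1 using 2 with k
    rw [inv_pow, pow_succ]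
    ring
  obtain ⟨M, hM⟩ := hKb.exists_norm_le
  have hbsum : Summable (fun k => (2 : ℝ)⁻¹ ^ (k + 1) • b k) :=
    .of_norm_bounded (hw.summable.mul_right M) fun k => by
      rw [norm_smul, Real.norm_of_nonneg (by positivity)]
      exact mul_le_mul_of_nonneg_left (hM _ (hb k)) (by positivity)
  have hasum : HasSum (fun k => (2 : ℝ)⁻¹ ^ (k + 1) • a k)
      (u + ∑' k, (2 : ℝ)⁻¹ ^ (k + 1) • b k) := by
    convert hsum.add hbsum.hasSum using 2 with k
    rw [← hab, ← smul_add, sub_add_cancel]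
  exact ⟨_, hA.mem_of_hasSum_smul hAc (fun k => by positivity) hw ha hasum,
    _, hK.mem_of_hasSum_smul hKc (fun k => by positivity) hw hb hbsum.hasSum,
    add_sub_cancel_right _ _⟩

end Normed

theorem exists_pos_smul_mem_sub_inter_closedBall {E : Type*} [NormedAddCommGroup E]
    [NormedSpace ℝ E] {A B : Set E} (hA : Convex ℝ A) (hB : Convex ℝ B) {x : E} (hxA : x ∈ A)
    (hxB : x ∈ B) {r : ℝ} (hr : 0 < r) {w : E} (hw : w ∈ A - B) :
    ∃ t > (0 : ℝ), t • w ∈ A - B ∩ closedBall x r := by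
  obtain ⟨a, ha, b, hb, rfl⟩ := hw
  set t := r / (r + ‖b - x‖)
  have ht₀ : 0 < t := by positivity
  have ht : t ∈ Icc (0 : ℝ) 1 := ⟨ht₀.le, div_le_one_of_le₀ (by simp) (by positivity)⟩
  have htb : t * ‖b - x‖ ≤ r := by
    rw [div_mul_eq_mul_div, div_le_iff₀ (by positivity)]
    nlinarith [norm_nonneg (b - x)]
  refine ⟨t, ht₀, x + t • (a - x), hA.add_smul_sub_mem hxA ha ht,
    x + t • (b - x), ⟨hB.add_smul_sub_mem hxB hb ht, ?_⟩, by module⟩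
  rwa [mem_closedBall, dist_eq_norm, add_sub_cancel_left, norm_smul, Real.norm_of_nonneg ht₀.le]

theorem bounded_extremality_in_reflexive_general {X : Type*} [NormedAddCommGroup X]
    [NormedSpace ℝ X] [CompleteSpace X]
    (Ω₁ Ω₂ : Set X)
    (hcl₁ : IsClosed Ω₁) (hcl₂ : IsClosed Ω₂)
    (hc₁ : Convex ℝ Ω₁) (hc₂ : Convex ℝ Ω₂)
    (hcore : (0 : X) ∈ Ω₁ - Ω₂ ∧
      ∀ v : X, ∃ γ > 0, ∀ t : ℝ, |t| < γ → t • v ∈ Ω₁ - Ω₂)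
    (xb : X) (hxb : xb ∈ Ω₁ ∩ Ω₂) :
    ∀ r > 0, (0 : X) ∈ interior (Ω₁ - Ω₂ ∩ Metric.closedBall xb r) := by
  intro r hr
  have hK : Convex ℝ (Ω₂ ∩ closedBall xb r) := hc₂.inter (convex_closedBall xb r)
  have hradial (v : X) : ∃ t > (0 : ℝ), t • v ∈ Ω₁ - Ω₂ ∩ closedBall xb r := by
    obtain ⟨γ, hγ, hγv⟩ := hcore.2 v
    obtain ⟨t, ht, htv⟩ := exists_pos_smul_mem_sub_inter_closedBall hc₁ hc₂ hxb.1 hxb.2 hr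
      (hγv (γ / 2) (by rw [abs_of_pos (half_pos hγ)]; exact half_lt_self hγ))
    exact ⟨t * (γ / 2), by positivity, by rwa [mul_smul]⟩
  have habs : Absorbent ℝ (closure (Ω₁ - Ω₂ ∩ closedBall xb r)) :=
    ((hc₁.sub hK).absorbent_of_forall_exists_pos_smul_mem hradial).mono subset_closure
  obtain ⟨δ, hδ, hball⟩ := Metric.mem_nhds_iff.1 <| mem_interior_iff_mem_nhds.1 <|
    (hc₁.sub hK).closure.zero_mem_interior_of_isClosed_of_absorbent isClosed_closure habs
  exact mem_interior_iff_mem_nhds.2 <| mem_of_superset (ball_mem_nhds 0 (half_pos hδ)) <|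
    ball_subset_sub_of_ball_subset_closure_sub hc₁ hcl₁ hK (hcl₂.inter isClosed_closedBall)
      (isBounded_closedBall.subset inter_subset_right) hball

theorem bounded_extremality_in_reflexive {X : Type*} [NormedAddCommGroup X]
    [NormedSpace ℝ X] [CompleteSpace X]
    (hrefl : Function.Surjective (NormedSpace.inclusionInDoubleDual ℝ X))
    (Ω₁ Ω₂ : Set X) (h₁ : Ω₁.Nonempty) (h₂ : Ω₂.Nonempty)
    (hcl₁ : IsClosed Ω₁) (hcl₂ : IsClosed Ω₂)
    (hc₁ : Convex ℝ Ω₁) (hc₂ : Convex ℝ Ω₂)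
    (hint : (interior (Ω₁ - Ω₂)).Nonempty)
    (hcore : (0 : X) ∈ Ω₁ - Ω₂ ∧
      ∀ v : X, ∃ γ > 0, ∀ t : ℝ, |t| < γ → t • v ∈ Ω₁ - Ω₂)
    (xb : X) (hxb : xb ∈ Ω₁ ∩ Ω₂) :
    ∀ r > 0, (0 : X) ∈ interior (Ω₁ - Ω₂ ∩ Metric.closedBall xb r) :=
  bounded_extremality_in_reflexive_general Ω₁ Ω₂ hcl₁ hcl₂ hc₁ hc₂ hcore xb hxb
end

section
/- Let Ω₁, Ω₂ be nonempty convex subsets of a normed space X with Ω₁ ∩ Ω₂ ≠ ∅, such that one of them is bounded and 0 ∈ int(Ω₁ − Ω₂). Then σ_{Ω₁ ∩ Ω₂}(x*) = (σ_{Ω₁} ⊕ σ_{Ω₂})(x*) for every continuous linear functional x*, where σ denotes the support function and ⊕ the infimal convolution. -/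
open Pointwise

private lemma ereal_sSup_coe_image {S : Set ℝ} (hne : S.Nonempty) (hbdd : BddAbove S) :
    sSup (Real.toEReal '' S) = ((sSup S : ℝ) : EReal) :=
  (Monotone.map_csSup_of_continuousAt (continuous_coe_real_ereal.continuousAt)
    (fun _ _ h => EReal.coe_le_coe_iff.mpr h) hne hbdd).symm

private lemma aux_nonpos {a b : ℝ} (h : ∀ t : ℝ, t ∈ Set.Ioc (0 : ℝ) 1 → a + t * b < 0) :
    a ≤ 0 := by
  by_contra hpos
  push_neg at hpos
  rcases le_or_gt 0 b with hb | hb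
  · have := h 1 ⟨one_pos, le_refl 1⟩
    nlinarith
  · set t := min 1 (a / (2 * (-b))) with ht
    have htpos : 0 < t := lt_min one_pos (div_pos hpos (by linarith))
    have ht1 : t ≤ 1 := min_le_left _ _
    have := h t ⟨htpos, ht1⟩
    have h2 : t ≤ a / (2 * (-b)) := min_le_right _ _
    rw [le_div_iff₀ (by linarith : (0:ℝ) < 2 * (-b))] at h2
    nlinarith

theorem support_function_infconv_eq {X : Type*} [NormedAddCommGroup X]
    [NormedSpace ℝ X] (Ω₁ Ω₂ : Set X) (h₁ : Ω₁.Nonempty) (h₂ : Ω₂.Nonempty)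
    (hc₁ : Convex ℝ Ω₁) (hc₂ : Convex ℝ Ω₂) (hne : (Ω₁ ∩ Ω₂).Nonempty)
    (hbdd : Bornology.IsBounded Ω₂) (hqc : (0 : X) ∈ interior (Ω₁ - Ω₂))
    (f : X →L[ℝ] ℝ) :
    sSup ((fun x => (f x : EReal)) '' (Ω₁ ∩ Ω₂)) =
      ⨅ g : X →L[ℝ] ℝ,
        sSup ((fun x => (g x : EReal)) '' Ω₁) +
          sSup ((fun x => ((f - g) x : EReal)) '' Ω₂) := by
  -- Boundedness setup
  obtain ⟨R, hR⟩ := hbdd.subset_closedBall 0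
  have hRnorm : ∀ x ∈ Ω₂, ‖x‖ ≤ R := fun x hx => by
    simpa [Metric.mem_closedBall] using hR hx
  set C : ℝ := ‖f‖ * R with hCdef
  have hC : ∀ x ∈ Ω₂, |f x| ≤ C := by
    intro x hx
    calc |f x| = ‖f x‖ := rfl
      _ ≤ ‖f‖ * ‖x‖ := f.le_opNorm x
      _ ≤ ‖f‖ * R := by
          have := hRnorm x hx
          have h0 : (0:ℝ) ≤ ‖f‖ := norm_nonneg _
          nlinarith
  -- the (real) value α of the support function of the intersection
  have hbddI : BddAbove (f '' (Ω₁ ∩ Ω₂)) := by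
    refine ⟨C, ?_⟩
    rintro _ ⟨x, hx, rfl⟩
    exact (abs_le.mp (hC x hx.2)).2
  set α : ℝ := sSup (f '' (Ω₁ ∩ Ω₂)) with hαdef
  have hneI : (f '' (Ω₁ ∩ Ω₂)).Nonempty := hne.image _
  have hαub : ∀ x ∈ Ω₁ ∩ Ω₂, f x ≤ α := fun x hx => le_csSup hbddI ⟨x, hx, rfl⟩
  have hL : sSup ((fun x => (f x : EReal)) '' (Ω₁ ∩ Ω₂)) = (α : EReal) := by
    rw [show (fun x => ((f x : ℝ) : EReal)) '' (Ω₁ ∩ Ω₂)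
        = Real.toEReal '' ((fun x => f x) '' (Ω₁ ∩ Ω₂)) from (Set.image_image _ _ _).symm]
    exact ereal_sSup_coe_image hneI hbddI
  apply le_antisymm
  · -- easy direction
    refine le_iInf fun g => sSup_le ?_
    rintro _ ⟨x, hx, rfl⟩
    have h1 : ((g x : ℝ) : EReal) ≤ sSup ((fun x => (g x : EReal)) '' Ω₁) :=
      le_sSup ⟨x, hx.1, rfl⟩
    have h2 : (((f - g) x : ℝ) : EReal) ≤ sSup ((fun x => ((f - g) x : EReal)) '' Ω₂) :=
      le_sSup ⟨x, hx.2, rfl⟩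
    calc ((f x : ℝ) : EReal) = ((g x : ℝ) : EReal) + (((f - g) x : ℝ) : EReal) := by
          rw [← EReal.coe_add]
          norm_cast
          simp [ContinuousLinearMap.sub_apply]
      _ ≤ _ := add_le_add h1 h2
  · -- hard direction: separation
    rw [hL]
    obtain ⟨δ, hδpos, hδ⟩ := Metric.mem_nhds_iff.mp (mem_interior_iff_mem_nhds.mp hqc)
    set S : Set (X × ℝ) :=
      {p | ∃ x₁ ∈ Ω₁, ∃ x₂ ∈ Ω₂, p.1 = x₁ - x₂ ∧ α - f x₂ < p.2} with hSdef
    have hS : Convex ℝ S := by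
      rintro ⟨u, r⟩ ⟨x₁, hx₁, x₂, hx₂, he, hlt⟩ ⟨v, s⟩ ⟨y₁, hy₁, y₂, hy₂, he', hlt'⟩
        a b ha hb hab
      refine ⟨a • x₁ + b • y₁, hc₁ hx₁ hy₁ ha hb hab,
        a • x₂ + b • y₂, hc₂ hx₂ hy₂ ha hb hab, ?_, ?_⟩
      · simp only [Prod.fst] at he he' ⊢
        simp only [Prod.smul_mk, Prod.mk_add_mk, smul_eq_mul]
        rw [he, he']
        module
      · have hfc : f (a • x₂ + b • y₂) = a * f x₂ + b * f y₂ := by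
          simp [map_add, map_smul, smul_eq_mul]
        simp only [Prod.smul_mk, Prod.mk_add_mk, smul_eq_mul, hfc]
        simp only [Prod.fst, Prod.snd] at hlt hlt' ⊢
        rcases ha.lt_or_eq with ha' | ha'
        · nlinarith [mul_lt_mul_of_pos_left hlt ha', mul_le_mul_of_nonneg_left hlt'.le hb,
            show (a + b) * α = α by rw [hab, one_mul]]
        · rw [← ha'] at hab ⊢
          simp at hab
          rw [hab]
          nlinarith
    have h0S : ((0 : X), (0 : ℝ)) ∉ S := by
      rintro ⟨x₁, hx₁, x₂, hx₂, he, hlt⟩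
      simp only at he hlt
      have hx12 : x₁ = x₂ := sub_eq_zero.mp he.symm
      have hx : x₂ ∈ Ω₁ ∩ Ω₂ := ⟨hx12 ▸ hx₁, hx₂⟩
      have := hαub x₂ hx
      linarith
    have hUsub : (Metric.ball (0 : X) δ) ×ˢ (Set.Ioi (α + C)) ⊆ S := by
      rintro ⟨u, r⟩ ⟨hu, hr⟩
      obtain ⟨x₁, hx₁, x₂, hx₂, he⟩ := Set.mem_sub.mp (hδ hu)
      refine ⟨x₁, hx₁, x₂, hx₂, he.symm, ?_⟩
      have h1 : -C ≤ f x₂ := neg_le_of_abs_le (hC x₂ hx₂)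
      simp only [Set.mem_Ioi] at hr
      simp only
      linarith
    have hptmem : ((0 : X), α + C + 1) ∈ (Metric.ball (0 : X) δ) ×ˢ (Set.Ioi (α + C)) :=
      ⟨by simpa using hδpos, by simp⟩
    have hpt : ((0 : X), α + C + 1) ∈ interior S :=
      interior_maximal hUsub (Metric.isOpen_ball.prod isOpen_Ioi) hptmem
    obtain ⟨φ, hφ⟩ := geometric_hahn_banach_open_point hS.interior isOpen_interior
      (fun h => h0S (interior_subset h))
    have hφ' : ∀ a ∈ interior S, φ a < 0 := by
      intro a ha
      have := hφ a ha
      rwa [show ((0:X), (0:ℝ)) = (0 : X × ℝ) from rfl, map_zero] at this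
    -- extend to all of S
    have hφS : ∀ a ∈ S, φ a ≤ 0 := by
      intro a ha
      refine aux_nonpos (b := φ (((0 : X), α + C + 1)) - φ a) fun t ht => ?_
      have hmem := hS.add_smul_sub_mem_interior ha hpt ht
      have := hφ' _ hmem
      rwa [map_add, map_smul, map_sub, smul_eq_mul] at this
    set c : ℝ := φ ((0 : X), (1 : ℝ)) with hcdef
    have hsplit : ∀ (u : X) (s : ℝ), φ (u, s) = φ (u, 0) + s * c := by
      intro u s
      have : (u, s) = (u, (0:ℝ)) + s • ((0:X), (1:ℝ)) := by
        simp [Prod.ext_iff]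
      rw [this, map_add, map_smul, smul_eq_mul]
    have hc : c < 0 := by
      set t : ℝ := α + C + 1 - α - C with htdef
      have h1 := hφ' _ hpt
      rw [hsplit 0 (α + C + 1)] at h1
      -- also need φ (0,0) = 0
      have h00 : φ ((0:X), (0:ℝ)) = 0 := by
        rw [show ((0:X), (0:ℝ)) = (0 : X × ℝ) from rfl, map_zero]
      rw [h00, zero_add] at h1
      -- (α + C + 1) * c < 0 and we need a positive multiplier... α + C + 1 could be ≤ 0!
      -- use instead the point (0, max (α + C) 0 + 1)
      have hmem2 : ((0 : X), max (α + C) 0 + 1) ∈ interior S :=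
        interior_maximal hUsub (Metric.isOpen_ball.prod isOpen_Ioi)
          ⟨by simpa using hδpos, by simp only [Set.mem_Ioi]; nlinarith [le_max_left (α+C) 0]⟩
      have h2 := hφ' _ hmem2
      rw [hsplit 0 (max (α + C) 0 + 1), h00, zero_add] at h2
      nlinarith [le_max_right (α + C) 0]
    -- the subgradient-like inequality
    have hkey : ∀ x₁ ∈ Ω₁, ∀ x₂ ∈ Ω₂, φ (x₁ - x₂, (0:ℝ)) + (α - f x₂) * c ≤ 0 := by
      intro x₁ hx₁ x₂ hx₂
      rw [← hsplit]
      refine le_of_forall_pos_le_add fun ε hε => ?_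
      have hmem : (x₁ - x₂, α - f x₂ + ε / (-c)) ∈ S :=
        ⟨x₁, hx₁, x₂, hx₂, rfl, by
          have := div_pos hε (by linarith : (0:ℝ) < -c)
          show α - f x₂ < α - f x₂ + ε / (-c)
          linarith⟩
      have h1 := hφS _ hmem
      rw [hsplit, hsplit] at h1 ⊢
      have hcne : c ≠ 0 := ne_of_lt hc
      have : (α - f x₂ + ε / (-c)) * c = (α - f x₂) * c - ε := by
        rw [add_mul, div_neg, neg_mul, div_mul_cancel₀ _ hcne]
        ring
      nlinarith
    set L : X →L[ℝ] ℝ := φ.comp (ContinuousLinearMap.inl ℝ X ℝ) with hLdef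
    have hLval : ∀ u : X, L u = φ (u, 0) := fun u => rfl
    set g : X →L[ℝ] ℝ := (-c)⁻¹ • L with hgdef
    have hgval : ∀ u : X, g u = (-c)⁻¹ * φ (u, 0) := fun u => rfl
    have hmain : ∀ x₁ ∈ Ω₁, ∀ x₂ ∈ Ω₂, g x₁ + (f x₂ - g x₂) ≤ α := by
      intro x₁ hx₁ x₂ hx₂
      have h1 := hkey x₁ hx₁ x₂ hx₂
      have hdiff : g x₁ - g x₂ = (-c)⁻¹ * φ (x₁ - x₂, 0) := by
        rw [hgval, hgval, ← mul_sub]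
        congr 1
        have : ((x₁ - x₂ : X), (0:ℝ)) = (x₁, (0:ℝ)) - (x₂, (0:ℝ)) := by
          simp [Prod.ext_iff]
        rw [this, map_sub]
      have hcpos : (0:ℝ) < -c := by linarith
      have h2 : φ (x₁ - x₂, 0) ≤ (α - f x₂) * (-c) := by nlinarith
      have h3 : (-c)⁻¹ * φ (x₁ - x₂, 0) ≤ α - f x₂ := by
        rw [← div_eq_inv_mul, div_le_iff₀ hcpos]
        exact h2
      linarith [hdiff ▸ h3]
    -- now assemble the real suprema
    have hbddB : BddAbove ((fun x => (f - g) x) '' Ω₂) := by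
      refine ⟨‖f - g‖ * R, ?_⟩
      rintro _ ⟨x, hx, rfl⟩
      calc (f - g) x ≤ ‖(f - g) x‖ := le_abs_self _
        _ ≤ ‖f - g‖ * ‖x‖ := (f - g).le_opNorm x
        _ ≤ ‖f - g‖ * R := by
            have := hRnorm x hx
            nlinarith [norm_nonneg (f - g)]
    have hneB : ((fun x => (f - g) x) '' Ω₂).Nonempty := h₂.image _
    set B : ℝ := sSup ((fun x => (f - g) x) '' Ω₂) with hBdef
    have hgA : ∀ x₁ ∈ Ω₁, g x₁ ≤ α - B := by
      intro x₁ hx₁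
      have : B ≤ α - g x₁ := by
        refine csSup_le hneB ?_
        rintro _ ⟨x₂, hx₂, rfl⟩
        have := hmain x₁ hx₁ x₂ hx₂
        simp only [ContinuousLinearMap.sub_apply]
        linarith
      linarith
    have hbddA : BddAbove ((fun x => g x) '' Ω₁) := by
      refine ⟨α - B, ?_⟩
      rintro _ ⟨x, hx, rfl⟩
      exact hgA x hx
    have hneA : ((fun x => g x) '' Ω₁).Nonempty := h₁.image _
    set A : ℝ := sSup ((fun x => g x) '' Ω₁) with hAdef
    have hAB : A + B ≤ α := by
      have : A ≤ α - B := csSup_le hneA (by rintro _ ⟨x, hx, rfl⟩; exact hgA x hx)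
      linarith
    calc (⨅ g : X →L[ℝ] ℝ, sSup ((fun x => (g x : EReal)) '' Ω₁)
            + sSup ((fun x => ((f - g) x : EReal)) '' Ω₂))
        ≤ sSup ((fun x => (g x : EReal)) '' Ω₁)
            + sSup ((fun x => ((f - g) x : EReal)) '' Ω₂) := iInf_le _ g
      _ = ((A : ℝ) : EReal) + ((B : ℝ) : EReal) := by
          rw [show (fun x => ((g x : ℝ) : EReal)) '' Ω₁
              = Real.toEReal '' ((fun x => g x) '' Ω₁) from
              (Set.image_image _ _ _).symm,
            show (fun x => (((f - g) x : ℝ) : EReal)) '' Ω₂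
              = Real.toEReal '' ((fun x => (f - g) x) '' Ω₂) from
              (Set.image_image _ _ _).symm,
            ereal_sSup_coe_image hneA hbddA, ereal_sSup_coe_image hneB hbddB]
      _ = ((A + B : ℝ) : EReal) := by rw [← EReal.coe_add]
      _ ≤ (α : EReal) := EReal.coe_le_coe_iff.mpr hAB
end

section
/- Exact infimal convolution for support functions: Under the assumptions that Ω₁, Ω₂ are nonempty convex subsets of a normed space with Ω₂ bounded and 0 ∈ int(Ω₁ − Ω₂), for every x* with σ_{Ω₁ ∩ Ω₂}(x*) < ∞ there exist x₁*, x₂* ∈ X* with x₁* + x₂* = x* and σ_{Ω₁ ∩ Ω₂}(x*) = σ_{Ω₁}(x₁*) + σ_{Ω₂}(x₂*), i.e., the infimal convolution is attained. -/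
/-!
Let `s` be the support function of `Ω₁ ∩ Ω₂` at `f`. It suffices to find a continuous linear `G`
with `(f - G) x₁ + G x₂ ≤ s` for all `x₁ ∈ Ω₁`, `x₂ ∈ Ω₂`: then `σ_{Ω₁}(f - G) + σ_{Ω₂}(G) ≤ s`,
and the reverse inequality always holds. Such a `G` is exactly a linear minorant of the convex set
`C = {(x₂ - x₁, s - f x₁)} ⊆ X × ℝ`. Over the origin `C` lies in `[0, ∞)` since `f ≤ s` on
`Ω₁ ∩ Ω₂`, and over a ball around the origin it is bounded above, by the qualification condition
and the boundedness of `Ω₂`. The M. Riesz extension theorem, applied to the cone generated by `C`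
and to the height functional on `{0} × ℝ`, gives a linear minorant, and it is continuous because
it is bounded above on a ball.
-/

open Pointwise Set

lemma PointedCone.hull_subset_insert_zero_convexConeHull {R E : Type*} [Semiring R]
    [PartialOrder R] [IsOrderedRing R] [AddCommMonoid E] [Module R E] (s : Set E) :
    (PointedCone.hull R s : Set E) ⊆ insert 0 (ConvexCone.hull R s : Set E) := by
  intro x hx
  induction hx using Submodule.span_induction with
  | mem x hx => exact Or.inr (ConvexCone.subset_hull hx)
  | zero => exact Or.inl rfl
  | add x y _ _ hx hy =>
    rcases hx with rfl | hx
    · simpa using hy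
    rcases hy with rfl | hy
    · simpa using Or.inr hx
    exact Or.inr ((ConvexCone.hull R s).add_mem hx hy)
  | smul c x _ hx =>
    rcases hx with rfl | hx
    · simp
    rcases c.2.eq_or_lt with hc | hc
    · left
      show (c : R) • x = 0
      simp [← hc]
    · exact Or.inr ((ConvexCone.hull R s).smul_mem hc hx)

lemma exists_linearMap_le_snd_of_convex {E : Type*} [AddCommGroup E] [Module ℝ E]
    {C : Set (E × ℝ)} (hC : Convex ℝ C) (hzero : ∀ t, ((0 : E), t) ∈ C → 0 ≤ t)
    (habs : Absorbent ℝ (Prod.fst '' C)) :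
    ∃ G : E →ₗ[ℝ] ℝ, ∀ p ∈ C, G p.1 ≤ p.2 := by
  let height := (LinearMap.snd ℝ E ℝ).toPMap (LinearMap.ker (LinearMap.fst ℝ E ℝ))
  have hnonneg : ∀ x : height.domain, (x : E × ℝ) ∈ PointedCone.hull ℝ C → 0 ≤ height x := by
    rintro ⟨⟨z, t⟩, hz⟩ hx
    obtain rfl : z = 0 := hz
    rcases PointedCone.hull_subset_insert_zero_convexConeHull C hx with hx | hx
    · simp_all [height]
    obtain ⟨r, hr, ⟨z', t'⟩, hp, hrp⟩ := (ConvexCone.mem_hull_of_convex hC).1 hx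
    simp only [Prod.smul_mk, Prod.mk.injEq, smul_eq_zero, hr.ne', false_or] at hrp
    obtain ⟨rfl, rfl⟩ := hrp
    simpa [height] using mul_nonneg hr.le (hzero t' hp)
  have hdense : ∀ y, ∃ x : height.domain, (x : E × ℝ) + y ∈ PointedCone.hull ℝ C := by
    rintro ⟨z, t⟩
    obtain ⟨r, hr, -, ⟨⟨z', t'⟩, hp, rfl⟩, rfl⟩ := habs.gauge_set_nonempty (x := z)
    refine ⟨⟨(0, r * t' - t), by simp [height]⟩, ?_⟩
    convert (PointedCone.hull ℝ C).smul_mem hr.le (PointedCone.subset_hull hp) using 1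
    simp
  obtain ⟨g, hg, hgC⟩ := riesz_extension _ height hnonneg hdense
  refine ⟨-g.comp (LinearMap.inl ℝ E ℝ), fun ⟨z, t⟩ hp => ?_⟩
  have hgt : g (0, t) = t := hg ⟨(0, t), by simp [height]⟩
  have hsplit : g (z, t) = g (z, 0) + g (0, t) := by rw [← map_add]; simp
  have := hgC _ (PointedCone.subset_hull hp)
  simp only [LinearMap.neg_apply, LinearMap.coe_comp, Function.comp_apply, LinearMap.inl_apply]
  linarith

lemma LinearMap.continuous_of_le_on_ball {X : Type*} [NormedAddCommGroup X] [NormedSpace ℝ X]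
    (G : X →ₗ[ℝ] ℝ) {δ K : ℝ} (hδ : 0 < δ) (hG : ∀ z ∈ Metric.ball (0 : X) δ, G z ≤ K) :
    Continuous G := by
  have hup : ∀ x, G x ≤ 2 * K / δ * ‖x‖ := by
    intro x
    rcases eq_or_ne x 0 with rfl | hx
    · simp
    have hr : 0 < δ / (2 * ‖x‖) := by positivity
    have hmem : (δ / (2 * ‖x‖)) • x ∈ Metric.ball (0 : X) δ := by
      rw [mem_ball_zero_iff, norm_smul, Real.norm_of_nonneg hr.le]
      field_simp
      linarith
    have hle := hG _ hmem
    rw [map_smul, smul_eq_mul, div_mul_eq_mul_div, div_le_iff₀ (by positivity)] at hle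
    rw [div_mul_eq_mul_div, le_div_iff₀ hδ]
    linarith
  refine AddMonoidHomClass.continuous_of_bound G (2 * K / δ) fun x => abs_le.2 ⟨?_, hup x⟩
  linarith [show -G x ≤ 2 * K / δ * ‖x‖ by simpa using hup (-x)]

theorem exists_continuousLinearMap_le_snd_of_convex {X : Type*} [NormedAddCommGroup X]
    [NormedSpace ℝ X] {C : Set (X × ℝ)} (hC : Convex ℝ C) (hzero : ∀ t, ((0 : X), t) ∈ C → 0 ≤ t)
    {δ K : ℝ} (hδ : 0 < δ) (hball : ∀ z ∈ Metric.ball (0 : X) δ, ∃ t ≤ K, (z, t) ∈ C) :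
    ∃ G : X →L[ℝ] ℝ, ∀ p ∈ C, G p.1 ≤ p.2 := by
  have habs : Absorbent ℝ (Prod.fst '' C) := (absorbent_ball_zero hδ).mono fun z hz =>
    let ⟨t, _, ht⟩ := hball z hz
    ⟨(z, t), ht, rfl⟩
  obtain ⟨G, hG⟩ := exists_linearMap_le_snd_of_convex hC hzero habs
  refine ⟨⟨G, G.continuous_of_le_on_ball (K := K) hδ fun z hz => ?_⟩, hG⟩
  obtain ⟨t, htK, ht⟩ := hball z hz
  exact (hG _ ht).trans htK

theorem exists_continuousLinearMap_sub_add_le {X : Type*} [NormedAddCommGroup X]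
    [NormedSpace ℝ X] {Ω₁ Ω₂ : Set X} (hc₁ : Convex ℝ Ω₁) (hc₂ : Convex ℝ Ω₂)
    (hbdd : Bornology.IsBounded Ω₂) (hqc : (0 : X) ∈ interior (Ω₁ - Ω₂)) {f : X →L[ℝ] ℝ}
    {s : ℝ} (hfs : ∀ x ∈ Ω₁ ∩ Ω₂, f x ≤ s) :
    ∃ G : X →L[ℝ] ℝ, ∀ x₁ ∈ Ω₁, ∀ x₂ ∈ Ω₂, (f - G) x₁ + G x₂ ≤ s := by
  let C := (fun q : X × X => (q.2 - q.1, s - f q.1)) '' (Ω₁ ×ˢ Ω₂)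
  have hC : Convex ℝ C := by
    rintro _ ⟨⟨a₁, a₂⟩, ha, rfl⟩ _ ⟨⟨b₁, b₂⟩, hb, rfl⟩ μ ν hμ hν hμν
    refine ⟨μ • (a₁, a₂) + ν • (b₁, b₂), hc₁.prod hc₂ ha hb hμ hν hμν, ?_⟩
    simp only [Prod.smul_mk, Prod.mk_add_mk, map_add, map_smul, smul_eq_mul, Prod.mk.injEq]
    constructor
    · module
    · linear_combination (-s) * hμν
  have hzero : ∀ t, ((0 : X), t) ∈ C → 0 ≤ t := by
    rintro t ⟨⟨x₁, x₂⟩, ⟨hx₁, hx₂⟩, hx⟩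
    simp only [Prod.mk.injEq, sub_eq_zero] at hx
    obtain ⟨rfl, rfl⟩ := hx
    exact sub_nonneg.2 (hfs _ ⟨hx₁, hx₂⟩)
  obtain ⟨M, hM⟩ := isBounded_iff_forall_norm_le.1 hbdd
  obtain ⟨δ, hδ, hδsub⟩ := Metric.mem_nhds_iff.1 (mem_interior_iff_mem_nhds.1 hqc)
  have hball : ∀ z ∈ Metric.ball (0 : X) δ, ∃ t ≤ s + ‖f‖ * M + ‖f‖ * δ, (z, t) ∈ C := by
    intro z hz
    obtain ⟨x₁, hx₁, x₂, hx₂, hsub⟩ := hδsub (by simpa using hz : -z ∈ Metric.ball (0 : X) δ)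
    refine ⟨s - f x₁, ?_, ⟨(x₁, x₂), ⟨hx₁, hx₂⟩, by simp [← neg_sub x₁ x₂, hsub]⟩⟩
    have hfx₂ : -f x₂ ≤ ‖f‖ * M := (neg_le_abs _).trans <|
      (f.le_opNorm x₂).trans (mul_le_mul_of_nonneg_left (hM x₂ hx₂) (norm_nonneg f))
    have hfz : f z ≤ ‖f‖ * δ := (le_abs_self _).trans <|
      (f.le_opNorm z).trans (mul_le_mul_of_nonneg_left (mem_ball_zero_iff.1 hz).le (norm_nonneg f))
    have : f x₁ - f x₂ = -f z := by rw [← map_sub, ← map_neg]; exact congrArg f hsub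
    linarith
  obtain ⟨G, hG⟩ := exists_continuousLinearMap_le_snd_of_convex hC hzero hδ hball
  refine ⟨G, fun x₁ hx₁ x₂ hx₂ => ?_⟩
  have := hG _ ⟨(x₁, x₂), ⟨hx₁, hx₂⟩, rfl⟩
  simp only [map_sub, sub_apply] at this ⊢
  linarith

lemma EReal.sSup_image_add_sSup_image_eq {α : Type*} {A B : Set α} {u v w : α → EReal}
    (hw : ∀ x ∈ A ∩ B, w x ≤ u x + v x)
    (huv : ∀ x ∈ A, ∀ y ∈ B, u x + v y ≤ sSup (w '' (A ∩ B))) :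
    sSup (u '' A) + sSup (v '' B) = sSup (w '' (A ∩ B)) := by
  refine le_antisymm (EReal.add_le_of_forall_lt fun a ha b hb => ?_) (sSup_le ?_)
  · obtain ⟨_, ⟨x, hx, rfl⟩, hax⟩ := lt_sSup_iff.1 ha
    obtain ⟨_, ⟨y, hy, rfl⟩, hby⟩ := lt_sSup_iff.1 hb
    exact (add_le_add hax.le hby.le).trans (huv x hx y hy)
  · rintro _ ⟨x, hx, rfl⟩
    exact (hw x hx).trans (add_le_add (le_sSup ⟨x, hx.1, rfl⟩) (le_sSup ⟨x, hx.2, rfl⟩))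

theorem support_function_infconv_attained_general {X : Type*} [NormedAddCommGroup X]
    [NormedSpace ℝ X] (Ω₁ Ω₂ : Set X)
    (hc₁ : Convex ℝ Ω₁) (hc₂ : Convex ℝ Ω₂) (hne : (Ω₁ ∩ Ω₂).Nonempty)
    (hbdd : Bornology.IsBounded Ω₂) (hqc : (0 : X) ∈ interior (Ω₁ - Ω₂))
    (f : X →L[ℝ] ℝ)
    (hfin : sSup ((fun x => (f x : EReal)) '' (Ω₁ ∩ Ω₂)) < ⊤) :
    ∃ f₁ f₂ : X →L[ℝ] ℝ, f₁ + f₂ = f ∧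
      sSup ((fun x => (f x : EReal)) '' (Ω₁ ∩ Ω₂)) =
        sSup ((fun x => (f₁ x : EReal)) '' Ω₁) +
          sSup ((fun x => (f₂ x : EReal)) '' Ω₂) := by
  obtain ⟨x₀, hx₀⟩ := hne
  set σ := sSup ((fun x => (f x : EReal)) '' (Ω₁ ∩ Ω₂))
  have hσ : (σ.toReal : EReal) = σ := EReal.coe_toReal hfin.ne <|
    ne_bot_of_le_ne_bot (EReal.coe_ne_bot (f x₀)) (le_sSup (mem_image_of_mem _ hx₀))
  have hfσ : ∀ x ∈ Ω₁ ∩ Ω₂, f x ≤ σ.toReal := fun x hx =>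
    EReal.coe_le_coe_iff.1 (hσ.symm ▸ le_sSup (mem_image_of_mem _ hx))
  obtain ⟨G, hG⟩ := exists_continuousLinearMap_sub_add_le hc₁ hc₂ hbdd hqc hfσ
  refine ⟨f - G, G, sub_add_cancel f G, (EReal.sSup_image_add_sSup_image_eq ?_ ?_).symm⟩
  · intro x _
    rw [← EReal.coe_add, sub_apply, sub_add_cancel]
  · intro x₁ hx₁ x₂ hx₂
    rw [← EReal.coe_add]
    exact (EReal.coe_le_coe_iff.2 (hG x₁ hx₁ x₂ hx₂)).trans_eq hσ

theorem support_function_infconv_attained {X : Type*} [NormedAddCommGroup X]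
    [NormedSpace ℝ X] (Ω₁ Ω₂ : Set X) (h₁ : Ω₁.Nonempty) (h₂ : Ω₂.Nonempty)
    (hc₁ : Convex ℝ Ω₁) (hc₂ : Convex ℝ Ω₂) (hne : (Ω₁ ∩ Ω₂).Nonempty)
    (hbdd : Bornology.IsBounded Ω₂) (hqc : (0 : X) ∈ interior (Ω₁ - Ω₂))
    (f : X →L[ℝ] ℝ)
    (hfin : sSup ((fun x => (f x : EReal)) '' (Ω₁ ∩ Ω₂)) < ⊤) :
    ∃ f₁ f₂ : X →L[ℝ] ℝ, f₁ + f₂ = f ∧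
      sSup ((fun x => (f x : EReal)) '' (Ω₁ ∩ Ω₂)) =
        sSup ((fun x => (f₁ x : EReal)) '' Ω₁) +
          sSup ((fun x => (f₂ x : EReal)) '' Ω₂) :=
  support_function_infconv_attained_general Ω₁ Ω₂ hc₁ hc₂ hne hbdd hqc f hfin
end

section
/- Let Ω₁, Ω₂ be convex subsets of a normed space X, let x̄ ∈ Ω₁ ∩ Ω₂, let x* ∈ N(x̄; Ω₁ ∩ Ω₂), and assume Ω₂ is bounded. Then the sets Θ₁ := Ω₁ × [0, ∞) and Θ₂ := {(x, μ) ∈ X × ℝ : x ∈ Ω₂, μ ≤ ⟨x*, x − x̄⟩} form an extremal system in X × ℝ; moreover, if int(Ω₁ − Ω₂) ≠ ∅ then int(Θ₁ − Θ₂) ≠ ∅. -/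
open Pointwise

theorem epigraph_sets_extremal {X : Type*} [NormedAddCommGroup X] [NormedSpace ℝ X]
    (Ω₁ Ω₂ : Set X) (hc₁ : Convex ℝ Ω₁) (hc₂ : Convex ℝ Ω₂)
    (hbdd : Bornology.IsBounded Ω₂)
    (xb : X) (hxb : xb ∈ Ω₁ ∩ Ω₂)
    (f : X →L[ℝ] ℝ) (hf : ∀ x ∈ Ω₁ ∩ Ω₂, f (x - xb) ≤ 0) :
    (∀ ε > 0, ∃ c : X × ℝ, ‖c‖ ≤ ε ∧
        (c +ᵥ (Ω₁ ×ˢ Set.Ici (0 : ℝ))) ∩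
          {p : X × ℝ | p.1 ∈ Ω₂ ∧ p.2 ≤ f (p.1 - xb)} = ∅) ∧
      ((interior (Ω₁ - Ω₂)).Nonempty →
        (interior ((Ω₁ ×ˢ Set.Ici (0 : ℝ)) -
          {p : X × ℝ | p.1 ∈ Ω₂ ∧ p.2 ≤ f (p.1 - xb)})).Nonempty) := by
  constructor
  · intro ε hε
    refine ⟨(0, ε), ?_, ?_⟩
    · simp [Prod.norm_def, abs_of_pos hε, hε.le]
    · rw [Set.eq_empty_iff_forall_notMem]
      rintro p ⟨⟨⟨q1, q2⟩, ⟨hq1, hq2⟩, rfl⟩, hp2, hp3⟩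
      simp only [Set.mem_Ici] at hq2
      have hp2' : q1 ∈ Ω₂ := by simpa using hp2
      have hp3' : ε + q2 ≤ f (q1 - xb) := by simpa using hp3
      have := hf q1 ⟨hq1, hp2'⟩
      linarith
  · rintro ⟨u, hu⟩
    obtain ⟨C, hC⟩ := hbdd.exists_norm_le
    set M : ℝ := ‖f‖ * (C + ‖xb‖) with hM
    have hsub : (Ω₁ - Ω₂) ×ˢ Set.Ici M ⊆
        (Ω₁ ×ˢ Set.Ici (0 : ℝ)) - {p : X × ℝ | p.1 ∈ Ω₂ ∧ p.2 ≤ f (p.1 - xb)} := by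
      rintro ⟨y, t⟩ ⟨hy, ht⟩
      simp only [Set.mem_prod, Set.mem_Ici] at hy ht ⊢
      obtain ⟨a, ha, b, hb, rfl⟩ := hy
      have hfb : |f (b - xb)| ≤ M := by
        calc |f (b - xb)| ≤ ‖f‖ * ‖b - xb‖ := f.le_opNorm _
        _ ≤ ‖f‖ * (C + ‖xb‖) := by
            have := norm_sub_le b xb
            have := hC b hb
            have := norm_nonneg f
            nlinarith
      have hfb' : -M ≤ f (b - xb) := (abs_le.mp hfb).1
      refine ⟨(a, t + f (b - xb)), ⟨ha, ?_⟩, (b, f (b - xb)), ⟨hb, le_refl _⟩, ?_⟩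
      · simp only [Set.mem_Ici]; linarith
      · simp [Prod.ext_iff]
    refine ⟨(u, M + 1), interior_mono hsub ?_⟩
    rw [interior_prod_eq]
    exact ⟨hu, by simp [interior_Ici]⟩
end
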